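/- arXiv:1901.04172 — 15 statements merged into one kernel-verified Lean document; each statement's English description precedes it below -/
import Mathlib

section
/- Σ_{i,j=1}^r a_{ij}² = (1/2)(Σ_{i=1}^r a_{ii})² + (1/2)(a_{11} − a_{22} − ⋯ − a_{rr})² + 2 Σ_{j=2}^r a_{1j}² − 2 Σ_{2 ≤ i < j ≤ r} (a_{ii} a_{jj} − a_{ij}²). -/
/-!
Split off the index `0`. Using the symmetry of `a`, both `∑ i j, a i j ^ 2` and
`(∑ i, a i i) ^ 2 = ∑ i j, a i i * a j j` expand into a diagonal part plus twice a sum over the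
pairs `i < j`, and the pairs containing `0` are exactly those with first index `0`. In terms of
the resulting partial sums the identity is linear.
-/

open Finset

section
variable {ι M R : Type*} [Fintype ι] [LinearOrder ι]

theorem Finset.sum_eq_sum_lt_add_add_sum_gt [AddCommMonoid M] (g : ι → M) (i : ι) :
    ∑ j, g j = ∑ j with j < i, g j + g i + ∑ j with i < j, g j := by
  have hge : univ.filter (fun j => ¬ j < i) = insert i (univ.filter (fun j => i < j)) := by
    ext j
    simp only [mem_filter, mem_univ, true_and, mem_insert, not_lt]
    exact le_iff_eq_or_lt.trans (or_congr eq_comm Iff.rfl)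
  rw [← sum_filter_add_sum_filter_not univ (· < i), hge, sum_insert (by simp), add_assoc]

theorem Finset.sum_sum_eq_sum_diag_add_two_mul_sum_lt [Semiring R] {f : ι → ι → R}
    (hf : ∀ i j, f i j = f j i) :
    ∑ i, ∑ j, f i j = ∑ i, f i i + 2 * ∑ i, ∑ j with i < j, f i j := by
  have hlower : ∑ i, ∑ j with j < i, f i j = ∑ i, ∑ j with i < j, f i j := by
    rw [sum_comm' (t' := univ) (s' := fun i => univ.filter (fun j => i < j)) (by simp)]
    exact sum_congr rfl fun i _ => sum_congr rfl fun j _ => hf j i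
  rw [sum_congr rfl fun i _ => sum_eq_sum_lt_add_add_sum_gt (f i) i, sum_add_distrib,
    sum_add_distrib, hlower, two_mul]
  abel

theorem Finset.sum_sum_lt_eq_of_isBot [AddCommMonoid M] {z : ι} (hz : IsBot z)
    (g : ι → ι → M) :
    ∑ i, ∑ j with i < j, g i j
      = ∑ j with j ≠ z, g z j + ∑ i with i ≠ z, ∑ j with i < j, g i j := by
  have hgt : univ.filter (fun j => z < j) = univ.filter (fun j => j ≠ z) := by
    ext j
    simpa using (hz j).lt_iff_ne'
  rw [← add_sum_erase univ _ (mem_univ z), filter_ne', hgt, filter_ne']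

end

/-- Algebraic decomposition of the squared norm of a symmetric matrix,
used in the proof of the Chen–Ricci inequalities for Riemannian submersions. -/
theorem stmt_0 (r : ℕ) (hr : 0 < r) (a : Fin r → Fin r → ℝ)
    (hsymm : ∀ i j, a i j = a j i) :
    ∑ i, ∑ j, (a i j) ^ 2 =
      (1 / 2) * (∑ i, a i i) ^ 2
        + (1 / 2) * (a ⟨0, hr⟩ ⟨0, hr⟩ -
            ∑ i ∈ Finset.univ.filter (fun i => i ≠ ⟨0, hr⟩), a i i) ^ 2
        + 2 * ∑ j ∈ Finset.univ.filter (fun j => j ≠ ⟨0, hr⟩), (a ⟨0, hr⟩ j) ^ 2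
        - 2 * ∑ i ∈ Finset.univ.filter (fun i => i ≠ ⟨0, hr⟩),
            ∑ j ∈ Finset.univ.filter (fun j => i < j),
              (a i i * a j j - (a i j) ^ 2) := by
  set z : Fin r := ⟨0, hr⟩
  have hz : IsBot z := fun i => Nat.zero_le i.1
  have hsq := sum_sum_eq_sum_diag_add_two_mul_sum_lt (f := fun i j => a i j ^ 2)
    fun i j => by rw [hsymm]
  have hdiag := sum_sum_eq_sum_diag_add_two_mul_sum_lt (f := fun i j => a i i * a j j)
    fun i j => mul_comm _ _
  rw [sum_sum_lt_eq_of_isBot hz] at hsq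
  rw [← sum_mul_sum, sum_sum_lt_eq_of_isBot hz, ← mul_sum] at hdiag
  rw [← add_sum_erase univ (fun i => a i i) (mem_univ z), filter_ne'] at hdiag ⊢
  simp only [← sq] at hdiag
  simp only [sum_sub_distrib, filter_ne'] at hsq ⊢
  linear_combination hsq - hdiag
end

section
/- Σ_{i,j=1}^r a_{ij}² ≥ (1/2)(Σ_{i=1}^r a_{ii})² − 2 Σ_{2 ≤ i < j ≤ r} (a_{ii} a_{jj} − a_{ij}²), and equality holds if and only if a_{11} = a_{22} + ⋯ + a_{rr} and a_{1j} = 0 for all j = 2, …, r. -/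
lemma double_sum_split {α : Type*} [LinearOrder α] (s : Finset α) (f : α → α → ℝ) :
    ∑ i ∈ s, ∑ j ∈ s, f i j =
      ∑ i ∈ s, f i i + ∑ i ∈ s, ∑ j ∈ s.filter (fun j => i < j), (f i j + f j i) := by
  have key : ∀ i ∈ s, ∑ j ∈ s, f i j =
      f i i + (∑ j ∈ s.filter (fun j => j < i), f i j
        + ∑ j ∈ s.filter (fun j => i < j), f i j) := by
    intro i hi
    rw [← Finset.sum_filter_add_sum_filter_not s (fun j => j < i) (f i)]
    have h1 : s.filter (fun j => ¬ j < i) = insert i (s.filter (fun j => i < j)) := by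
      ext j
      simp only [Finset.mem_filter, Finset.mem_insert, not_lt]
      constructor
      · rintro ⟨hj, hij⟩
        rcases hij.lt_or_eq with h | h
        · exact Or.inr ⟨hj, h⟩
        · exact Or.inl h.symm
      · rintro (h | ⟨hj, h⟩)
        · exact ⟨h ▸ hi, le_of_eq (h ▸ rfl)⟩
        · exact ⟨hj, h.le⟩
    rw [h1, Finset.sum_insert (by simp)]
    ring
  rw [Finset.sum_congr rfl key, Finset.sum_add_distrib, Finset.sum_add_distrib]
  have hswap : ∑ i ∈ s, ∑ j ∈ s.filter (fun j => j < i), f i j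
      = ∑ i ∈ s, ∑ j ∈ s.filter (fun j => i < j), f j i := by
    rw [Finset.sum_comm' (s' := fun j => s.filter (fun i => j < i)) (t' := s)]
    intro i j
    simp only [Finset.mem_filter]
    tauto
  rw [hswap, ← Finset.sum_add_distrib]
  congr 1
  refine Finset.sum_congr rfl fun i _ => ?_
  rw [← Finset.sum_add_distrib]
  exact Finset.sum_congr rfl fun j _ => add_comm _ _

/-- Algebraic inequality for a symmetric matrix, with its equality case,
used in the proof of the Chen–Ricci inequalities for Riemannian submersions. -/
theorem stmt_1 (r : ℕ) (hr : 0 < r) (a : Fin r → Fin r → ℝ)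
    (hsymm : ∀ i j, a i j = a j i) :
    (∑ i, ∑ j, (a i j) ^ 2 ≥
      (1 / 2) * (∑ i, a i i) ^ 2
        - 2 * ∑ i ∈ Finset.univ.filter (fun i => i ≠ ⟨0, hr⟩),
            ∑ j ∈ Finset.univ.filter (fun j => i < j),
              (a i i * a j j - (a i j) ^ 2)) ∧
    ((∑ i, ∑ j, (a i j) ^ 2 =
      (1 / 2) * (∑ i, a i i) ^ 2
        - 2 * ∑ i ∈ Finset.univ.filter (fun i => i ≠ ⟨0, hr⟩),
            ∑ j ∈ Finset.univ.filter (fun j => i < j),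
              (a i i * a j j - (a i j) ^ 2)) ↔
      (a ⟨0, hr⟩ ⟨0, hr⟩ = ∑ i ∈ Finset.univ.filter (fun i => i ≠ ⟨0, hr⟩), a i i ∧
        ∀ j : Fin r, j ≠ ⟨0, hr⟩ → a ⟨0, hr⟩ j = 0)) := by
  set z : Fin r := ⟨0, hr⟩ with hz
  set s0 : Finset (Fin r) := Finset.univ.filter (fun i => i ≠ z) with hs0
  have hzle : ∀ j : Fin r, z ≤ j := fun j => by
    rw [Fin.le_def]
    exact Nat.zero_le _
  have hne : ∀ j : Fin r, j ≠ z ↔ z < j := fun j =>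
    ⟨fun h => lt_of_le_of_ne (hzle j) (Ne.symm h), fun h => (ne_of_gt h)⟩
  have hsum_split : ∀ g : Fin r → ℝ, ∑ i, g i = g z + ∑ i ∈ s0, g i := by
    intro g
    rw [hs0, Finset.filter_ne']
    exact (Finset.add_sum_erase _ g (Finset.mem_univ z)).symm
  have hfz : Finset.univ.filter (fun j => z < j) = s0 := by
    rw [hs0]; exact Finset.filter_congr (fun j _ => by simp [hne j])
  have hfi : ∀ i ∈ s0, s0.filter (fun j => i < j) = Finset.univ.filter (fun j => i < j) := by
    intro i hi
    have hzi : z < i := (hne i).mp (Finset.mem_filter.mp hi).2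
    rw [hs0, Finset.filter_filter]
    exact Finset.filter_congr (fun j _ => by
      constructor
      · exact fun h => h.2
      · exact fun h => ⟨(hne j).mpr (hzi.trans h), h⟩)
  set SD' : ℝ := ∑ i ∈ s0, (a i i)^2 with hSD'
  set B : ℝ := ∑ i ∈ s0, a i i with hB
  set C : ℝ := ∑ j ∈ s0, (a z j)^2 with hC
  set P : ℝ := ∑ i ∈ s0, ∑ j ∈ Finset.univ.filter (fun j => i < j), a i i * a j j with hP
  set Q : ℝ := ∑ i ∈ s0, ∑ j ∈ Finset.univ.filter (fun j => i < j), (a i j)^2 with hQ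
  -- eq1
  have eq1 : ∑ i, ∑ j, (a i j)^2 = a z z^2 + SD' + 2*C + 2*Q := by
    rw [double_sum_split Finset.univ (fun i j => (a i j)^2)]
    have h2 : ∀ i, ∑ j ∈ Finset.univ.filter (fun j => i < j), ((a i j)^2 + (a j i)^2)
        = 2 * ∑ j ∈ Finset.univ.filter (fun j => i < j), (a i j)^2 := by
      intro i
      rw [Finset.mul_sum]
      exact Finset.sum_congr rfl fun j _ => by rw [hsymm j i]; ring
    rw [Finset.sum_congr rfl (fun i _ => h2 i),
      hsum_split (fun i => (a i i)^2),
      hsum_split (fun i => 2 * ∑ j ∈ Finset.univ.filter (fun j => i < j), (a i j)^2)]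
    rw [hfz, ← Finset.mul_sum]
    ring
  -- eq2
  have eq2 : ∑ i, a i i = a z z + B := hsum_split (fun i => a i i)
  -- eq3
  have eq3 : B^2 = SD' + 2*P := by
    have : B^2 = ∑ i ∈ s0, ∑ j ∈ s0, a i i * a j j := by
      rw [sq, Finset.sum_mul_sum]
    rw [this, double_sum_split s0 (fun i j => a i i * a j j)]
    have h2 : ∀ i ∈ s0, ∑ j ∈ s0.filter (fun j => i < j), (a i i * a j j + a j j * a i i)
        = 2 * ∑ j ∈ Finset.univ.filter (fun j => i < j), a i i * a j j := by
      intro i hi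
      rw [hfi i hi, Finset.mul_sum]
      exact Finset.sum_congr rfl fun j _ => by ring
    rw [Finset.sum_congr rfl h2, ← Finset.mul_sum, hSD', hP]
    congr 1
    exact Finset.sum_congr rfl fun i _ => (sq (a i i)).symm
  -- the P - Q decomposition
  have hPQ : ∑ i ∈ s0, ∑ j ∈ Finset.univ.filter (fun j => i < j),
      (a i i * a j j - (a i j)^2) = P - Q := by
    rw [hP, hQ, ← Finset.sum_sub_distrib]
    exact Finset.sum_congr rfl fun i _ => by rw [← Finset.sum_sub_distrib]
  -- key identity
  have hmain : ∑ i, ∑ j, (a i j)^2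
      - ((1/2) * (∑ i, a i i)^2 - 2 * ∑ i ∈ s0, ∑ j ∈ Finset.univ.filter (fun j => i < j),
          (a i i * a j j - (a i j)^2))
      = (1/2) * (a z z - B)^2 + 2*C := by
    rw [eq1, eq2, hPQ]
    linarith [eq3]
  have hCnn : 0 ≤ C := Finset.sum_nonneg fun j _ => sq_nonneg _
  constructor
  · nlinarith [sq_nonneg (a z z - B), hCnn, hmain]
  · constructor
    · intro heq
      have h0 : (1/2) * (a z z - B)^2 + 2*C = 0 := by linarith [hmain, heq]
      have hC0 : C = 0 := by nlinarith [sq_nonneg (a z z - B)]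
      have hB0 : a z z = B := by
        have : (a z z - B)^2 = 0 := by nlinarith
        have := sq_eq_zero_iff.mp this
        linarith [this]
      refine ⟨hB0, fun j hj => ?_⟩
      have hmem : j ∈ s0 := by rw [hs0]; simp [hj]
      have := (Finset.sum_eq_zero_iff_of_nonneg (fun j _ => sq_nonneg (a z j))).mp hC0 j hmem
      exact sq_eq_zero_iff.mp this
    · rintro ⟨h1, h2⟩
      have hC0 : C = 0 := Finset.sum_eq_zero fun j hj => by
        rw [h2 j (Finset.mem_filter.mp hj).2]; ring
      have : a z z - B = 0 := by rw [h1]; ring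
      have := hmain
      rw [hC0, ‹a z z - B = 0›] at this
      linarith
end

section
/- For every unit vector U ∈ V, R̂ic(U) ≥ ((c+3)/4)(r−1) − ((c−1)/4)((r−2)η(U)² + 1) − ⟨T(U,U), N⟩. Moreover, equality holds for every unit vector U ∈ V if and only if T = 0 (i.e. each fiber of the submersion is totally geodesic). -/
open scoped RealInnerProductSpace

/-- Ricci curvature inequality for the fibers of an anti-invariant Riemannian
submersion from a Sasakian space form with vertical Reeb vector field. -/
theorem stmt_2 {V W : Type*} [NormedAddCommGroup V] [InnerProductSpace ℝ V]
    [NormedAddCommGroup W] [InnerProductSpace ℝ W]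
    (c : ℝ) (r : ℕ) (hr : 0 < r)
    (U : OrthonormalBasis (Fin r) ℝ V)
    (ξ : V) (hξ : ‖ξ‖ = 1) (η : V → ℝ) (hη : ∀ X, η X = ⟪X, ξ⟫)
    (T : V →ₗ[ℝ] V →ₗ[ℝ] W) (hT : ∀ X Y, T X Y = T Y X)
    (N : W) (hN : N = ∑ j, T (U j) (U j))
    (Rhat : V → V → V → V → ℝ)
    (hRhat : ∀ X Y Z W', Rhat X Y Z W' =
      (c + 3) / 4 * (⟪Y, Z⟫ * ⟪X, W'⟫ - ⟪X, Z⟫ * ⟪Y, W'⟫)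
        + (c - 1) / 4 * (η X * η Z * ⟪Y, W'⟫ - η Y * η Z * ⟪X, W'⟫
            + η Y * η W' * ⟪X, Z⟫ - η X * η W' * ⟪Y, Z⟫)
        - ⟪T X W', T Y Z⟫ + ⟪T Y W', T X Z⟫)
    (Ric : V → ℝ) (hRic : ∀ u, Ric u = ∑ j, Rhat (U j) u u (U j)) :
    (∀ u : V, ‖u‖ = 1 →
      Ric u ≥ (c + 3) / 4 * ((r : ℝ) - 1)
        - (c - 1) / 4 * (((r : ℝ) - 2) * (η u) ^ 2 + 1) - ⟪T u u, N⟫) ∧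
    ((∀ u : V, ‖u‖ = 1 →
      Ric u = (c + 3) / 4 * ((r : ℝ) - 1)
        - (c - 1) / 4 * (((r : ℝ) - 2) * (η u) ^ 2 + 1) - ⟪T u u, N⟫) ↔ T = 0) := by
  have hjj : ∀ j, ⟪U j, U j⟫ = 1 := fun j => by
    have h1 := U.orthonormal.1 j
    rw [real_inner_self_eq_norm_mul_norm, h1, one_mul]
  have hxx : ⟪ξ, ξ⟫ = 1 := by
    rw [real_inner_self_eq_norm_mul_norm, hξ, one_mul]
  have key : ∀ u : V, ‖u‖ = 1 → Ric u =
      ((c + 3) / 4 * ((r : ℝ) - 1)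
        - (c - 1) / 4 * (((r : ℝ) - 2) * (η u) ^ 2 + 1) - ⟪T u u, N⟫)
      + ∑ j, ⟪T u (U j), T u (U j)⟫ := by
    intro u hu
    have huu : ⟪u, u⟫ = 1 := by
      rw [real_inner_self_eq_norm_mul_norm, hu, one_mul]
    have hTsym : ∀ j : Fin r, T (U j) u = T u (U j) := fun j => hT _ _
    have hsummand : ∀ j : Fin r, Rhat (U j) u u (U j) =
        ((c + 3) / 4 - (c - 1) / 4 * (⟪u, ξ⟫ * ⟪u, ξ⟫))
          + (-((c + 3) / 4)) * (⟪u, U j⟫ * ⟪U j, u⟫)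
          + ((c - 1) / 4 * (2 * ⟪u, ξ⟫)) * (⟪ξ, U j⟫ * ⟪U j, u⟫)
          + (-((c - 1) / 4)) * (⟪ξ, U j⟫ * ⟪U j, ξ⟫)
          + (-⟪T u u, T (U j) (U j)⟫)
          + ⟪T u (U j), T u (U j)⟫ := by
      intro j
      rw [hRhat]
      simp only [hη, hjj, huu, hTsym]
      rw [real_inner_comm (T (U j) (U j)) (T u u)]
      simp only [real_inner_comm u (U j), real_inner_comm (U j) ξ]
      ring
    have hS0 : ∑ _j : Fin r,
        ((c + 3) / 4 - (c - 1) / 4 * (⟪u, ξ⟫ * ⟪u, ξ⟫))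
        = (r : ℝ) * ((c + 3) / 4 - (c - 1) / 4 * (⟪u, ξ⟫ * ⟪u, ξ⟫)) := by
      rw [Finset.sum_const, Finset.card_univ, Fintype.card_fin, nsmul_eq_mul]
    have hS1 : ∑ j : Fin r, (-((c + 3) / 4)) * (⟪u, U j⟫ * ⟪U j, u⟫)
        = (-((c + 3) / 4)) * 1 := by
      rw [← Finset.mul_sum, U.sum_inner_mul_inner, huu]
    have hS2 : ∑ j : Fin r, ((c - 1) / 4 * (2 * ⟪u, ξ⟫)) * (⟪ξ, U j⟫ * ⟪U j, u⟫)
        = ((c - 1) / 4 * (2 * ⟪u, ξ⟫)) * ⟪u, ξ⟫ := by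
      rw [← Finset.mul_sum, U.sum_inner_mul_inner, real_inner_comm ξ u]
    have hS3 : ∑ j : Fin r, (-((c - 1) / 4)) * (⟪ξ, U j⟫ * ⟪U j, ξ⟫)
        = (-((c - 1) / 4)) * 1 := by
      rw [← Finset.mul_sum, U.sum_inner_mul_inner, hxx]
    have hS4 : ∑ j : Fin r, (-⟪T u u, T (U j) (U j)⟫) = -⟪T u u, N⟫ := by
      rw [Finset.sum_neg_distrib, ← inner_sum, ← hN]
    rw [hRic, Finset.sum_congr rfl fun j _ => hsummand j,
        Finset.sum_add_distrib, Finset.sum_add_distrib, Finset.sum_add_distrib,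
        Finset.sum_add_distrib, Finset.sum_add_distrib,
        hS0, hS1, hS2, hS3, hS4, hη]
    ring
  constructor
  · intro u hu
    rw [key u hu]
    have : (0:ℝ) ≤ ∑ j, ⟪T u (U j), T u (U j)⟫ :=
      Finset.sum_nonneg fun j _ => real_inner_self_nonneg
    linarith
  · constructor
    · intro heq
      have hTU : ∀ u : V, ‖u‖ = 1 → ∀ j : Fin r, T u (U j) = 0 := by
        intro u hu j
        have h0 : ∑ j, ⟪T u (U j), T u (U j)⟫ = 0 := by
          have := heq u hu
          rw [key u hu] at this
          linarith
        have hz : ⟪T u (U j), T u (U j)⟫ = 0 := by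
          have h := (Finset.sum_eq_zero_iff_of_nonneg
            (fun j _ => real_inner_self_nonneg)).1 h0 j (Finset.mem_univ j)
          exact h
        exact inner_self_eq_zero.1 hz
      have hTx : ∀ (x : V) (j : Fin r), T x (U j) = 0 := by
        intro x j
        rcases eq_or_ne x 0 with rfl | hx
        · simp
        · have hxu : ‖(‖x‖⁻¹ • x)‖ = 1 := by
            rw [norm_smul, norm_inv, norm_norm, inv_mul_cancel₀ (norm_ne_zero_iff.2 hx)]
          have := hTU (‖x‖⁻¹ • x) hxu j
          have h2 : T x (U j) = ‖x‖ • T (‖x‖⁻¹ • x) (U j) := by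
            rw [map_smul, LinearMap.smul_apply, smul_smul,
              mul_inv_cancel₀ (norm_ne_zero_iff.2 hx), one_smul]
          rw [h2, this, smul_zero]
      refine LinearMap.ext fun x => ?_
      have : T x = 0 := by
        apply U.toBasis.ext
        intro j
        simp [OrthonormalBasis.coe_toBasis, hTx x j]
      rw [this]; rfl
    · intro hT0 u hu
      rw [key u hu, hT0]
      simp
end

section
/- 2τ̂ ≥ ((c+3)/4) r(r−1) − ((c−1)/2)(r−1) − ‖N‖² (that is, 2τ̂ ≥ ((c+3)/4) r(r−1) − ((c−1)/2)(r−1) − r²‖H‖²), and equality holds if and only if T = 0 (i.e. each fiber is totally geodesic). -/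
open scoped RealInnerProductSpace

private lemma stmt3_swap (r : ℕ) (g : Fin r → Fin r → ℝ) (hsym : ∀ i j, g i j = g j i)
    (hdiag : ∀ i, g i i = 0) :
    ∑ i, ∑ j, g i j = 2 * ∑ i, ∑ j ∈ Finset.univ.filter (fun j => i < j), g i j := by
  classical
  have hins : ∀ i : Fin r, (Finset.univ.filter (fun j => ¬ i < j))
      = insert i (Finset.univ.filter (fun j => j < i)) := by
    intro i
    ext j
    simp [not_lt, le_iff_lt_or_eq, or_comm, eq_comm]
  have h1 : ∀ i : Fin r, ∑ j, g i j
      = (∑ j ∈ Finset.univ.filter (fun j => i < j), g i j)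
        + ∑ j ∈ Finset.univ.filter (fun j => j < i), g i j := by
    intro i
    rw [← Finset.sum_filter_add_sum_filter_not Finset.univ (fun j => i < j) (g i), hins i,
      Finset.sum_insert (by simp), hdiag i, zero_add]
  have h2 : ∑ i, ∑ j ∈ Finset.univ.filter (fun j => j < i), g i j
      = ∑ i, ∑ j ∈ Finset.univ.filter (fun j => i < j), g i j := by
    rw [Finset.sum_comm' (t' := Finset.univ) (s' := fun j => Finset.univ.filter (fun i => j < i))
      (by intro x y; simp)]
    exact Finset.sum_congr rfl fun i _ => Finset.sum_congr rfl fun j _ => hsym j i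
  simp_rw [h1, Finset.sum_add_distrib, h2]
  ring

/-- Scalar curvature inequality for the fibers (vertical Reeb vector field). -/
theorem stmt_3 {V W : Type*} [NormedAddCommGroup V] [InnerProductSpace ℝ V]
    [NormedAddCommGroup W] [InnerProductSpace ℝ W]
    (c : ℝ) (r : ℕ) (hr : 0 < r)
    (U : OrthonormalBasis (Fin r) ℝ V)
    (ξ : V) (hξ : ‖ξ‖ = 1) (η : V → ℝ) (hη : ∀ X, η X = ⟪X, ξ⟫)
    (T : V →ₗ[ℝ] V →ₗ[ℝ] W) (hT : ∀ X Y, T X Y = T Y X)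
    (N : W) (hN : N = ∑ j, T (U j) (U j))
    (Rhat : V → V → V → V → ℝ)
    (hRhat : ∀ X Y Z W', Rhat X Y Z W' =
      (c + 3) / 4 * (⟪Y, Z⟫ * ⟪X, W'⟫ - ⟪X, Z⟫ * ⟪Y, W'⟫)
        + (c - 1) / 4 * (η X * η Z * ⟪Y, W'⟫ - η Y * η Z * ⟪X, W'⟫
            + η Y * η W' * ⟪X, Z⟫ - η X * η W' * ⟪Y, Z⟫)
        - ⟪T X W', T Y Z⟫ + ⟪T Y W', T X Z⟫)
    (τ : ℝ) (hτ : τ = ∑ i, ∑ j ∈ Finset.univ.filter (fun j => i < j),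
      Rhat (U i) (U j) (U j) (U i)) :
    (2 * τ ≥ (c + 3) / 4 * ((r : ℝ) * ((r : ℝ) - 1))
        - (c - 1) / 2 * ((r : ℝ) - 1) - ‖N‖ ^ 2) ∧
    ((2 * τ = (c + 3) / 4 * ((r : ℝ) * ((r : ℝ) - 1))
        - (c - 1) / 2 * ((r : ℝ) - 1) - ‖N‖ ^ 2) ↔ T = 0) := by
  classical
  have hUU : ∀ i j : Fin r, ⟪U i, U j⟫ = if i = j then (1:ℝ) else 0 :=
    orthonormal_iff_ite.mp U.orthonormal
  -- closed form for the sectional-type curvature terms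
  have hg : ∀ i j : Fin r, Rhat (U i) (U j) (U j) (U i)
      = (c + 3) / 4 * (1 - (if i = j then (1:ℝ) else 0))
        + (c - 1) / 4 * (2 * η (U i) * η (U j) * (if i = j then (1:ℝ) else 0)
            - η (U j) ^ 2 - η (U i) ^ 2)
        - ⟪T (U i) (U i), T (U j) (U j)⟫ + ‖T (U i) (U j)‖ ^ 2 := by
    intro i j
    rw [hRhat, hT (U j) (U i), real_inner_self_eq_norm_sq (T (U i) (U j))]
    have hUk : ∀ k : Fin r, ⟪U k, U k⟫ = (1:ℝ) := fun k => by rw [hUU]; exact if_pos rfl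
    rw [hUk i, hUk j]
    by_cases h : i = j
    · subst h
      rw [hUk i, if_pos (rfl : i = i)]
      ring
    · have h2 : ⟪U i, U j⟫ = (0:ℝ) := by rw [hUU]; exact if_neg h
      have h3 : ⟪U j, U i⟫ = (0:ℝ) := by rw [hUU]; exact if_neg (Ne.symm h)
      rw [h2, h3, if_neg h]
      ring
  have hdiag : ∀ i : Fin r, Rhat (U i) (U i) (U i) (U i) = 0 := by
    intro i
    rw [hg i i, real_inner_self_eq_norm_sq (T (U i) (U i)), if_pos (rfl : i = i)]
    ring
  have hsym : ∀ i j : Fin r, Rhat (U i) (U j) (U j) (U i)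
      = Rhat (U j) (U i) (U i) (U j) := by
    intro i j
    have hij : (if j = i then (1:ℝ) else 0) = (if i = j then 1 else 0) :=
      if_congr eq_comm rfl rfl
    rw [hg i j, hg j i, hT (U j) (U i),
      real_inner_comm (T (U i) (U i)) (T (U j) (U j)), hij]
    ring
  -- Parseval
  have hη2 : ∑ i, η (U i) ^ 2 = 1 := by
    have hp := U.sum_inner_mul_inner ξ ξ
    have : ∀ i : Fin r, ⟪ξ, U i⟫ * ⟪U i, ξ⟫ = η (U i) ^ 2 := by
      intro i
      rw [hη, real_inner_comm ξ (U i)]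
      ring
    simp_rw [this] at hp
    rw [hp, real_inner_self_eq_norm_sq, hξ]
    norm_num
  -- norm of N
  have hNorm : ‖N‖ ^ 2 = ∑ i, ⟪T (U i) (U i), N⟫ := by
    rw [← real_inner_self_eq_norm_sq]
    nth_rewrite 1 [hN]
    rw [sum_inner]
  -- the key identity
  set S : ℝ := ∑ i, ∑ j, ‖T (U i) (U j)‖ ^ 2 with hS
  have hinner : ∀ i : Fin r, ∑ j, Rhat (U i) (U j) (U j) (U i)
      = (c + 3) / 4 * ((r : ℝ) - 1)
        + (c - 1) / 4 * (2 * η (U i) ^ 2 - 1 - (r : ℝ) * η (U i) ^ 2)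
        - ⟪T (U i) (U i), N⟫ + ∑ j, ‖T (U i) (U j)‖ ^ 2 := by
    intro i
    simp_rw [hg i]
    simp only [Finset.sum_add_distrib, Finset.sum_sub_distrib]
    congr 1
    congr 1
    congr 1
    · rw [← Finset.mul_sum]
      congr 1
      rw [Finset.sum_sub_distrib, Finset.sum_const, Finset.sum_ite_eq]
      simp [mul_comm]
    · rw [← Finset.mul_sum]
      congr 1
      rw [Finset.sum_sub_distrib, Finset.sum_sub_distrib, Finset.sum_const, hη2]
      simp only [mul_ite, mul_one, mul_zero, Finset.sum_ite_eq, Finset.mem_univ, if_true,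
        Finset.card_univ, Fintype.card_fin, nsmul_eq_mul]
      ring
    · rw [hN, inner_sum]
  have key : 2 * τ = (c + 3) / 4 * ((r : ℝ) * ((r : ℝ) - 1))
      - (c - 1) / 2 * ((r : ℝ) - 1) - ‖N‖ ^ 2 + S := by
    rw [hτ, ← stmt3_swap r _ hsym hdiag]
    simp_rw [hinner]
    simp only [Finset.sum_add_distrib, Finset.sum_sub_distrib, Finset.sum_const,
      Finset.card_univ, Fintype.card_fin, nsmul_eq_mul, ← Finset.mul_sum, hη2, hS]
    rw [← hNorm]
    ring
  have hSnonneg : 0 ≤ S :=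
    Finset.sum_nonneg fun i _ => Finset.sum_nonneg fun j _ => sq_nonneg _
  constructor
  · linarith
  constructor
  · intro h
    have hS0 : S = 0 := by linarith
    have hzero : ∀ i j : Fin r, T (U i) (U j) = 0 := by
      intro i j
      have h1 := (Finset.sum_eq_zero_iff_of_nonneg
        (fun i _ => Finset.sum_nonneg fun j _ => sq_nonneg ‖T (U i) (U j)‖)).mp hS0
        i (Finset.mem_univ i)
      have h2 := (Finset.sum_eq_zero_iff_of_nonneg
        (fun j _ => sq_nonneg ‖T (U i) (U j)‖)).mp h1 j (Finset.mem_univ j)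
      have := pow_eq_zero_iff (n := 2) (by norm_num) |>.mp h2
      simpa using this
    apply Module.Basis.ext U.toBasis
    intro i
    apply Module.Basis.ext U.toBasis
    intro j
    simpa using hzero i j
  · intro h
    have hS0 : S = 0 := by
      rw [hS, h]
      simp
    linarith
end

section
/- 2τ̂ = ((c+3)/4) r(r−1) − ((c−1)/2)(r−1) − ‖N‖² + Σ_{i=1}^r Σ_{j=1}^r ‖T(U_i, U_j)‖². -/
/-!
Since `R̂(U_i, U_j, U_j, U_i)` is symmetric in `i, j` and vanishes for `i = j`, `2τ̂` is the full
double trace `∑_{i,j} R̂(U_i, U_j, U_j, U_i)`. This trace is computed piece by piece: the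
constant-curvature part gives `r(r - 1)`, the `η`-part gives `2(1 - r)‖ξ‖²` by Parseval, and the
O'Neill part gives `∑_{i,j} ‖T(U_i, U_j)‖² - ‖N‖²` because `T` is symmetric.
-/

open scoped RealInnerProductSpace
open Finset

theorem Finset.sum_sum_eq_two_mul_sum_sum_filter_lt {ι R : Type*} [Fintype ι] [LinearOrder ι]
    [NonAssocSemiring R] (f : ι → ι → R) (hsymm : ∀ i j, f i j = f j i) (hdiag : ∀ i, f i i = 0) :
    ∑ i, ∑ j, f i j = 2 * ∑ i, ∑ j with i < j, f i j := by
  have hsplit : ∀ i j, f i j = (if i < j then f i j else 0) + (if j < i then f i j else 0) := by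
    intro i j
    rcases lt_trichotomy i j with h | rfl | h
    · simp [h, h.not_gt]
    · simp [hdiag]
    · simp [h, h.not_gt]
  have hswap : ∑ i, ∑ j, (if j < i then f i j else 0) = ∑ i, ∑ j, (if i < j then f i j else 0) := by
    rw [sum_comm]
    simp_rw [hsymm]
  calc ∑ i, ∑ j, f i j
      = ∑ i, ∑ j, (if i < j then f i j else 0) + ∑ i, ∑ j, (if j < i then f i j else 0) := by
        simp only [← sum_add_distrib, ← hsplit]
    _ = 2 * ∑ i, ∑ j with i < j, f i j := by simp_rw [hswap, sum_filter, two_mul]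

theorem norm_sum_sq_eq_sum_sum_inner {ι E : Type*} [NormedAddCommGroup E] [InnerProductSpace ℝ E]
    (s : Finset ι) (v : ι → E) :
    ‖∑ i ∈ s, v i‖ ^ 2 = ∑ i ∈ s, ∑ j ∈ s, ⟪v i, v j⟫ := by
  simp_rw [← real_inner_self_eq_norm_sq, sum_inner, inner_sum]

section FiberCurvature

variable {V W : Type*} [NormedAddCommGroup V] [InnerProductSpace ℝ V]
  [NormedAddCommGroup W] [InnerProductSpace ℝ W]

def constCurvTensor (X Y Z W' : V) : ℝ :=
  ⟪Y, Z⟫ * ⟪X, W'⟫ - ⟪X, Z⟫ * ⟪Y, W'⟫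

def reebCurvTensor (ξ X Y Z W' : V) : ℝ :=
  ⟪X, ξ⟫ * ⟪Z, ξ⟫ * ⟪Y, W'⟫ - ⟪Y, ξ⟫ * ⟪Z, ξ⟫ * ⟪X, W'⟫
    + ⟪Y, ξ⟫ * ⟪W', ξ⟫ * ⟪X, Z⟫ - ⟪X, ξ⟫ * ⟪W', ξ⟫ * ⟪Y, Z⟫

def gaussCurvTensor (T : V →ₗ[ℝ] V →ₗ[ℝ] W) (X Y Z W' : V) : ℝ :=
  ⟪T Y W', T X Z⟫ - ⟪T X W', T Y Z⟫

noncomputable def fiberCurvTensor (c : ℝ) (ξ : V) (T : V →ₗ[ℝ] V →ₗ[ℝ] W) (X Y Z W' : V) : ℝ :=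
  (c + 3) / 4 * constCurvTensor X Y Z W' + (c - 1) / 4 * reebCurvTensor ξ X Y Z W'
    + gaussCurvTensor T X Y Z W'

variable (c : ℝ) (ξ : V) (T : V →ₗ[ℝ] V →ₗ[ℝ] W)

theorem fiberCurvTensor_self (X : V) : fiberCurvTensor c ξ T X X X X = 0 := by
  simp only [fiberCurvTensor, constCurvTensor, reebCurvTensor, gaussCurvTensor]
  ring

theorem fiberCurvTensor_swap (hT : ∀ X Y, T X Y = T Y X) (X Y : V) :
    fiberCurvTensor c ξ T X Y Y X = fiberCurvTensor c ξ T Y X X Y := by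
  simp only [fiberCurvTensor, constCurvTensor, reebCurvTensor, gaussCurvTensor]
  rw [real_inner_comm X Y, hT Y X, real_inner_comm (T X X) (T Y Y)]
  ring

theorem sum_sum_gaussCurvTensor (hT : ∀ X Y, T X Y = T Y X) {ι : Type*} (s : Finset ι) (v : ι → V) :
    ∑ i ∈ s, ∑ j ∈ s, gaussCurvTensor T (v i) (v j) (v j) (v i)
      = ∑ i ∈ s, ∑ j ∈ s, ‖T (v i) (v j)‖ ^ 2 - ‖∑ j ∈ s, T (v j) (v j)‖ ^ 2 := by
  rw [norm_sum_sq_eq_sum_sum_inner]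
  simp only [gaussCurvTensor, sum_sub_distrib]
  congr 1
  refine sum_congr rfl fun i _ => sum_congr rfl fun j _ => ?_
  rw [hT (v j) (v i), real_inner_self_eq_norm_sq]

variable {ι : Type*} [Fintype ι] (b : OrthonormalBasis ι ℝ V)

theorem OrthonormalBasis.sum_sum_constCurvTensor :
    ∑ i, ∑ j, constCurvTensor (b i) (b j) (b j) (b i) = Fintype.card ι * (Fintype.card ι - 1) := by
  classical
  simp only [constCurvTensor, b.inner_eq_one, b.inner_eq_ite, mul_ite, mul_one, mul_zero,
    sum_sub_distrib, sum_const, card_univ, nsmul_eq_mul, sum_ite_eq', mem_univ, ↓reduceIte]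
  ring

theorem OrthonormalBasis.sum_sum_reebCurvTensor :
    ∑ i, ∑ j, reebCurvTensor ξ (b i) (b j) (b j) (b i) = 2 * (1 - Fintype.card ι) * ‖ξ‖ ^ 2 := by
  classical
  simp only [reebCurvTensor, b.inner_eq_one, b.inner_eq_ite, mul_ite, mul_one, mul_zero, ← pow_two,
    sum_sub_distrib, sum_add_distrib, sum_ite_eq, sum_ite_eq', mem_univ, ↓reduceIte,
    b.sum_sq_inner_right, sum_const, card_univ, nsmul_eq_mul, ← mul_sum]
  ring

theorem OrthonormalBasis.sum_sum_fiberCurvTensor (hT : ∀ X Y, T X Y = T Y X) :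
    ∑ i, ∑ j, fiberCurvTensor c ξ T (b i) (b j) (b j) (b i)
      = (c + 3) / 4 * (Fintype.card ι * (Fintype.card ι - 1))
        + (c - 1) / 2 * (1 - Fintype.card ι) * ‖ξ‖ ^ 2
        + ∑ i, ∑ j, ‖T (b i) (b j)‖ ^ 2 - ‖∑ j, T (b j) (b j)‖ ^ 2 := by
  simp only [fiberCurvTensor, sum_add_distrib, ← mul_sum, b.sum_sum_constCurvTensor,
    b.sum_sum_reebCurvTensor, sum_sum_gaussCurvTensor T hT]
  ring

end FiberCurvature

theorem stmt_4_general {V W : Type*} [NormedAddCommGroup V] [InnerProductSpace ℝ V]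
    [NormedAddCommGroup W] [InnerProductSpace ℝ W]
    (c : ℝ) (r : ℕ)
    (U : OrthonormalBasis (Fin r) ℝ V)
    (ξ : V) (hξ : ‖ξ‖ = 1) (η : V → ℝ) (hη : ∀ X, η X = ⟪X, ξ⟫)
    (T : V →ₗ[ℝ] V →ₗ[ℝ] W) (hT : ∀ X Y, T X Y = T Y X)
    (N : W) (hN : N = ∑ j, T (U j) (U j))
    (Rhat : V → V → V → V → ℝ)
    (hRhat : ∀ X Y Z W', Rhat X Y Z W' =
      (c + 3) / 4 * (⟪Y, Z⟫ * ⟪X, W'⟫ - ⟪X, Z⟫ * ⟪Y, W'⟫)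
        + (c - 1) / 4 * (η X * η Z * ⟪Y, W'⟫ - η Y * η Z * ⟪X, W'⟫
            + η Y * η W' * ⟪X, Z⟫ - η X * η W' * ⟪Y, Z⟫)
        - ⟪T X W', T Y Z⟫ + ⟪T Y W', T X Z⟫)
    (τ : ℝ) (hτ : τ = ∑ i, ∑ j ∈ Finset.univ.filter (fun j => i < j),
      Rhat (U i) (U j) (U j) (U i)) :
    2 * τ = (c + 3) / 4 * ((r : ℝ) * ((r : ℝ) - 1))
      - (c - 1) / 2 * ((r : ℝ) - 1) - ‖N‖ ^ 2
      + ∑ i, ∑ j, ‖T (U i) (U j)‖ ^ 2 := by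
  have hR : Rhat = fiberCurvTensor c ξ T := by
    ext X Y Z W'
    simp only [hRhat, hη, fiberCurvTensor, constCurvTensor, reebCurvTensor, gaussCurvTensor]
    ring
  subst hR hτ hN
  rw [← sum_sum_eq_two_mul_sum_sum_filter_lt _ (fun _ _ => fiberCurvTensor_swap c ξ T hT _ _)
    (fun _ => fiberCurvTensor_self c ξ T _), U.sum_sum_fiberCurvTensor c ξ T hT, hξ,
    Fintype.card_fin]
  ring

/-- Scalar curvature identity for the fibers (vertical Reeb vector field). -/
theorem stmt_4 {V W : Type*} [NormedAddCommGroup V] [InnerProductSpace ℝ V]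
    [NormedAddCommGroup W] [InnerProductSpace ℝ W]
    (c : ℝ) (r : ℕ) (hr : 0 < r)
    (U : OrthonormalBasis (Fin r) ℝ V)
    (ξ : V) (hξ : ‖ξ‖ = 1) (η : V → ℝ) (hη : ∀ X, η X = ⟪X, ξ⟫)
    (T : V →ₗ[ℝ] V →ₗ[ℝ] W) (hT : ∀ X Y, T X Y = T Y X)
    (N : W) (hN : N = ∑ j, T (U j) (U j))
    (Rhat : V → V → V → V → ℝ)
    (hRhat : ∀ X Y Z W', Rhat X Y Z W' =
      (c + 3) / 4 * (⟪Y, Z⟫ * ⟪X, W'⟫ - ⟪X, Z⟫ * ⟪Y, W'⟫)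
        + (c - 1) / 4 * (η X * η Z * ⟪Y, W'⟫ - η Y * η Z * ⟪X, W'⟫
            + η Y * η W' * ⟪X, Z⟫ - η X * η W' * ⟪Y, Z⟫)
        - ⟪T X W', T Y Z⟫ + ⟪T Y W', T X Z⟫)
    (τ : ℝ) (hτ : τ = ∑ i, ∑ j ∈ Finset.univ.filter (fun j => i < j),
      Rhat (U i) (U j) (U j) (U i)) :
    2 * τ = (c + 3) / 4 * ((r : ℝ) * ((r : ℝ) - 1))
      - (c - 1) / 2 * ((r : ℝ) - 1) - ‖N‖ ^ 2
      + ∑ i, ∑ j, ‖T (U i) (U j)‖ ^ 2 :=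
  stmt_4_general c r U ξ hξ η hη T hT N hN Rhat hRhat τ hτ
end

section
/- R̂ic(U_1) ≥ ((c+3)/4)(r−1) − ((c−1)/4)((r−2)η(U_1)² + 1) − (1/4)‖N‖² (that is, the last term is −(1/4) r² ‖H‖²). Equality holds if and only if T(U_1, U_1) = Σ_{j=2}^r T(U_j, U_j) and T(U_1, U_j) = 0 for all j = 2, …, r. -/
open scoped RealInnerProductSpace

/-!
Only the terms `j ≠ 1` contribute to `R̂ic(U₁) = ∑ⱼ R̂(Uⱼ, U₁, U₁, Uⱼ)`, and for an orthonormal pair the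
Gauss equation gives `R̂(Uⱼ, U₁, U₁, Uⱼ) = (c+3)/4 - (c-1)/4 (η(U₁)² + η(Uⱼ)²) - ⟪T₁₁, Tⱼⱼ⟫ + ‖T₁ⱼ‖²`.
Summing, Parseval `∑ⱼ η(Uⱼ)² = ‖ξ‖² = 1` turns the `η`-terms into `(r-2) η(U₁)² + 1`, and with
`S = ∑_{j ≠ 1} Tⱼⱼ`, so that `N = T₁₁ + S`, polarization
`-⟪T₁₁, S⟫ = ‖T₁₁ - S‖²/4 - ‖N‖²/4` shows that `R̂ic(U₁)` exceeds the bound by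
`‖T₁₁ - S‖²/4 + ∑_{j ≠ 1} ‖T₁ⱼ‖² ≥ 0`, which vanishes exactly in the stated equality case.
-/

section GaussEquation

open Finset

variable {V W : Type*} [NormedAddCommGroup V] [InnerProductSpace ℝ V]
  [NormedAddCommGroup W] [InnerProductSpace ℝ W]

/-- The right-hand side of the Gauss equation, with `η X = ⟪X, ξ⟫`. -/
noncomputable def gaussCurvature (c : ℝ) (ξ : V) (T : V →ₗ[ℝ] V →ₗ[ℝ] W) (X Y Z W' : V) : ℝ :=
  (c + 3) / 4 * (⟪Y, Z⟫ * ⟪X, W'⟫ - ⟪X, Z⟫ * ⟪Y, W'⟫)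
    + (c - 1) / 4 * (⟪X, ξ⟫ * ⟪Z, ξ⟫ * ⟪Y, W'⟫ - ⟪Y, ξ⟫ * ⟪Z, ξ⟫ * ⟪X, W'⟫
        + ⟪Y, ξ⟫ * ⟪W', ξ⟫ * ⟪X, Z⟫ - ⟪X, ξ⟫ * ⟪W', ξ⟫ * ⟪Y, Z⟫)
    - ⟪T X W', T Y Z⟫ + ⟪T Y W', T X Z⟫

theorem gaussCurvature_self_left (c : ℝ) (ξ : V) (T : V →ₗ[ℝ] V →ₗ[ℝ] W) (X Z W' : V) :
    gaussCurvature c ξ T X X Z W' = 0 := by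
  unfold gaussCurvature
  ring

theorem gaussCurvature_of_orthonormal (c : ℝ) (ξ : V) {T : V →ₗ[ℝ] V →ₗ[ℝ] W}
    (hT : ∀ X Y, T X Y = T Y X) {X Y : V} (hX : ‖X‖ = 1) (hY : ‖Y‖ = 1) (hXY : ⟪X, Y⟫ = 0) :
    gaussCurvature c ξ T Y X X Y =
      (c + 3) / 4 - (c - 1) / 4 * (⟪X, ξ⟫ ^ 2 + ⟪Y, ξ⟫ ^ 2) - ⟪T X X, T Y Y⟫ + ‖T X Y‖ ^ 2 := by
  have hYX : ⟪Y, X⟫ = 0 := by rw [real_inner_comm, hXY]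
  simp only [gaussCurvature, real_inner_self_eq_norm_sq, hX, hY, hXY, hYX, hT Y X,
    real_inner_comm (T X X)]
  ring

theorem norm_sq_div_four_add_sum_norm_sq_eq_zero_iff {E F ι : Type*} [NormedAddCommGroup E]
    [NormedAddCommGroup F] (x : E) (s : Finset ι) (y : ι → F) :
    ‖x‖ ^ 2 / 4 + ∑ j ∈ s, ‖y j‖ ^ 2 = 0 ↔ x = 0 ∧ ∀ j ∈ s, y j = 0 := by
  rw [add_eq_zero_iff_of_nonneg (by positivity) (by positivity),
    sum_eq_zero_iff_of_nonneg fun _ _ ↦ by positivity]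
  simp

variable {ι : Type*} [Fintype ι] [DecidableEq ι] (U : OrthonormalBasis ι ℝ V)

theorem sum_gaussCurvature_basis (c : ℝ) {ξ : V} (hξ : ‖ξ‖ = 1) {T : V →ₗ[ℝ] V →ₗ[ℝ] W}
    (hT : ∀ X Y, T X Y = T Y X) (i : ι) :
    ∑ j, gaussCurvature c ξ T (U j) (U i) (U i) (U j) =
      (c + 3) / 4 * ((Fintype.card ι : ℝ) - 1)
        - (c - 1) / 4 * (((Fintype.card ι : ℝ) - 2) * ⟪U i, ξ⟫ ^ 2 + 1)
        - 1 / 4 * ‖∑ j, T (U j) (U j)‖ ^ 2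
        + (‖T (U i) (U i) - ∑ j ∈ univ.erase i, T (U j) (U j)‖ ^ 2 / 4
            + ∑ j ∈ univ.erase i, ‖T (U i) (U j)‖ ^ 2) := by
  have hparseval : ⟪U i, ξ⟫ ^ 2 + ∑ j ∈ univ.erase i, ⟪U j, ξ⟫ ^ 2 = 1 := by
    rw [add_sum_erase _ (fun j ↦ ⟪U j, ξ⟫ ^ 2) (mem_univ i), U.sum_sq_inner_right, hξ, one_pow]
  set A := T (U i) (U i)
  set S := ∑ j ∈ univ.erase i, T (U j) (U j)
  have hN : ∑ j, T (U j) (U j) = A + S := (add_sum_erase _ _ (mem_univ i)).symm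
  rw [← add_sum_erase _ _ (mem_univ i), gaussCurvature_self_left, zero_add,
    sum_congr rfl fun j hj ↦ gaussCurvature_of_orthonormal c ξ hT (U.orthonormal.1 i)
      (U.orthonormal.1 j) (U.orthonormal.2 (ne_of_mem_erase hj).symm)]
  simp only [sum_add_distrib, sum_sub_distrib, ← mul_sum, ← inner_sum, sum_const,
    card_erase_of_mem (mem_univ i), card_univ, nsmul_eq_mul]
  rw [hN, Nat.cast_sub (Fintype.card_pos_iff.2 ⟨i⟩), norm_add_sq_real, norm_sub_sq_real]
  linear_combination (1 - c) / 4 * hparseval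

end GaussEquation

/-- Chen–Ricci inequality for the fibers (vertical Reeb vector field). -/
theorem stmt_5 {V W : Type*} [NormedAddCommGroup V] [InnerProductSpace ℝ V]
    [NormedAddCommGroup W] [InnerProductSpace ℝ W]
    (c : ℝ) (r : ℕ) (hr : 0 < r)
    (U : OrthonormalBasis (Fin r) ℝ V)
    (ξ : V) (hξ : ‖ξ‖ = 1) (η : V → ℝ) (hη : ∀ X, η X = ⟪X, ξ⟫)
    (T : V →ₗ[ℝ] V →ₗ[ℝ] W) (hT : ∀ X Y, T X Y = T Y X)
    (N : W) (hN : N = ∑ j, T (U j) (U j))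
    (Rhat : V → V → V → V → ℝ)
    (hRhat : ∀ X Y Z W', Rhat X Y Z W' =
      (c + 3) / 4 * (⟪Y, Z⟫ * ⟪X, W'⟫ - ⟪X, Z⟫ * ⟪Y, W'⟫)
        + (c - 1) / 4 * (η X * η Z * ⟪Y, W'⟫ - η Y * η Z * ⟪X, W'⟫
            + η Y * η W' * ⟪X, Z⟫ - η X * η W' * ⟪Y, Z⟫)
        - ⟪T X W', T Y Z⟫ + ⟪T Y W', T X Z⟫)
    (Ric : V → ℝ) (hRic : ∀ u, Ric u = ∑ j, Rhat (U j) u u (U j)) :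
    (Ric (U ⟨0, hr⟩) ≥ (c + 3) / 4 * ((r : ℝ) - 1)
        - (c - 1) / 4 * (((r : ℝ) - 2) * (η (U ⟨0, hr⟩)) ^ 2 + 1)
        - (1 / 4) * ‖N‖ ^ 2) ∧
    ((Ric (U ⟨0, hr⟩) = (c + 3) / 4 * ((r : ℝ) - 1)
        - (c - 1) / 4 * (((r : ℝ) - 2) * (η (U ⟨0, hr⟩)) ^ 2 + 1)
        - (1 / 4) * ‖N‖ ^ 2) ↔
      (T (U ⟨0, hr⟩) (U ⟨0, hr⟩) =
          ∑ j ∈ Finset.univ.filter (fun j => j ≠ ⟨0, hr⟩), T (U j) (U j) ∧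
        ∀ j : Fin r, j ≠ ⟨0, hr⟩ → T (U ⟨0, hr⟩) (U j) = 0)) := by
  have hRhat_eq : Rhat = gaussCurvature c ξ T := by
    funext X Y Z W'
    simp only [hRhat, hη, gaussCurvature]
  rw [hRic, hRhat_eq, sum_gaussCurvature_basis U c hξ hT, Fintype.card_fin, ← hN, hη,
    Finset.filter_ne' Finset.univ, ge_iff_le, le_add_iff_nonneg_right, add_eq_left,
    norm_sq_div_four_add_sum_norm_sq_eq_zero_iff, sub_eq_zero]
  refine ⟨by positivity, and_congr_right' ?_⟩
  simp only [Finset.mem_erase, Finset.mem_univ, and_true]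
end

section
/- 2τ* ≤ ((c+3)/4) n(n−1) + (3/4)(c−1) Σ_{i=1}^n ‖C X_i‖² (in the geometric situation Σ_{i=1}^n ‖C X_i‖² = n + tr(φB)), and equality holds if and only if A = 0 (i.e. the horizontal distribution is integrable). -/
open scoped RealInnerProductSpace

/-- Scalar curvature inequality for the horizontal distribution (vertical Reeb vector field). -/
theorem stmt_6 {H V : Type*} [NormedAddCommGroup H] [InnerProductSpace ℝ H]
    [NormedAddCommGroup V] [InnerProductSpace ℝ V]
    (c : ℝ) (n : ℕ) (hn : 0 < n)
    (X : OrthonormalBasis (Fin n) ℝ H)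
    (C : H →ₗ[ℝ] H) (hC : ∀ x y, ⟪C x, y⟫ = -⟪x, C y⟫)
    (A : H →ₗ[ℝ] H →ₗ[ℝ] V) (hA : ∀ x y, A x y = -A y x)
    (Rstar : H → H → H → H → ℝ)
    (hRstar : ∀ x y z w, Rstar x y z w =
      (c + 3) / 4 * (⟪y, z⟫ * ⟪x, w⟫ - ⟪x, z⟫ * ⟪y, w⟫)
        + (c - 1) / 4 * (⟪C y, z⟫ * ⟪C x, w⟫ - ⟪C y, w⟫ * ⟪C x, z⟫
            - 2 * ⟪w, C z⟫ * ⟪C x, y⟫)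
        + 2 * ⟪A x y, A z w⟫ - ⟪A y z, A x w⟫ + ⟪A x z, A y w⟫)
    (τs : ℝ) (hτs : τs = ∑ i, ∑ j ∈ Finset.univ.filter (fun j => i < j),
      Rstar (X i) (X j) (X j) (X i)) :
    (2 * τs ≤ (c + 3) / 4 * ((n : ℝ) * ((n : ℝ) - 1))
        + 3 / 4 * (c - 1) * ∑ i, ‖C (X i)‖ ^ 2) ∧
    ((2 * τs = (c + 3) / 4 * ((n : ℝ) * ((n : ℝ) - 1))
        + 3 / 4 * (c - 1) * ∑ i, ‖C (X i)‖ ^ 2) ↔ A = 0) := by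
  have hCz : ∀ x : H, ⟪C x, x⟫ = 0 := by
    intro x
    have h := hC x x
    have h2 : ⟪x, C x⟫ = ⟪C x, x⟫ := real_inner_comm _ _
    linarith
  have hAz : ∀ x : H, A x x = 0 := by
    intro x
    have h := hA x x
    have : A x x + A x x = 0 := by nth_rewrite 2 [h]; simp
    have h2 : (2 : ℝ) • A x x = 0 := by rw [two_smul]; exact this
    simpa using h2
  have hXX : ∀ i j : Fin n, ⟪X i, X j⟫ = if i = j then 1 else 0 := by
    intro i j
    have := X.orthonormal
    rw [orthonormal_iff_ite] at this
    exact this i j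
  -- per-pair formula
  have key : ∀ i j : Fin n, Rstar (X i) (X j) (X j) (X i)
      = (c + 3) / 4 * (if i = j then 0 else 1)
        + 3 * ((c - 1) / 4) * ⟪C (X i), X j⟫ ^ 2
        - 3 * ‖A (X i) (X j)‖ ^ 2 := by
    intro i j
    rw [hRstar]
    have h1 : ⟪X j, X j⟫ = 1 := by simp [hXX]
    have h2 : ⟪X i, X i⟫ = 1 := by simp [hXX]
    have h3 : ⟪X i, X j⟫ = if i = j then 1 else 0 := hXX i j
    have h3' : ⟪X j, X i⟫ = if i = j then 1 else 0 := by
      rw [real_inner_comm, h3]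
    have h4 : ⟪C (X j), X j⟫ = 0 := hCz _
    have h5 : ⟪C (X j), X i⟫ = -⟪C (X i), X j⟫ := by
      rw [hC, real_inner_comm]
    have h6 : ⟪X i, C (X j)⟫ = -⟪C (X i), X j⟫ := by
      rw [real_inner_comm, h5]
    have h7 : A (X j) (X i) = -(A (X i) (X j)) := hA _ _
    have h8 : A (X j) (X j) = 0 := hAz _
    have h9 : ⟪A (X i) (X j), A (X i) (X j)⟫ = ‖A (X i) (X j)‖ ^ 2 :=
      real_inner_self_eq_norm_sq _
    rw [h1, h2, h3, h3', h4, h5, h6, h7, h8]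
    rw [inner_neg_right, inner_zero_left, h9]
    by_cases h : i = j <;> simp [h] <;> ring
  set g : Fin n → Fin n → ℝ := fun i j => Rstar (X i) (X j) (X j) (X i) with hg
  have hsym : ∀ i j, g i j = g j i := by
    intro i j
    simp only [hg]
    rw [key, key]
    have e1 : (if i = j then (0:ℝ) else 1) = (if j = i then 0 else 1) := by
      simp [eq_comm]
    have e2 : ⟪C (X j), X i⟫ = -⟪C (X i), X j⟫ := by rw [hC, real_inner_comm]
    have e3 : A (X j) (X i) = -(A (X i) (X j)) := hA _ _
    rw [e1, e2, e3, norm_neg]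
    ring
  have hdiag : ∀ i, g i i = 0 := by
    intro i
    simp only [hg]
    rw [key]
    simp [hCz, hAz]
  -- split the full double sum
  have split : ∀ i j : Fin n, g i j
      = (if i < j then g i j else 0) + (if j < i then g i j else 0)
        + (if i = j then g i j else 0) := by
    intro i j
    rcases lt_trichotomy i j with h | h | h
    · simp [h, asymm h, h.ne]
    · simp [h, lt_irrefl]
    · simp [h, asymm h, h.ne']
  have hτs' : τs = ∑ i, ∑ j, (if i < j then g i j else 0) := by
    rw [hτs]
    refine Finset.sum_congr rfl fun i _ => ?_
    rw [Finset.sum_filter]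
  have hswap : ∑ i, ∑ j, (if j < i then g i j else 0)
      = ∑ i, ∑ j, (if i < j then g i j else 0) := by
    rw [Finset.sum_comm]
    refine Finset.sum_congr rfl fun i _ => Finset.sum_congr rfl fun j _ => ?_
    rw [hsym]
  have htot : ∑ i, ∑ j, g i j = 2 * τs := by
    have : ∑ i, ∑ j, g i j
        = ∑ i, ∑ j, ((if i < j then g i j else 0) + (if j < i then g i j else 0)
            + (if i = j then g i j else 0)) := by
      refine Finset.sum_congr rfl fun i _ => Finset.sum_congr rfl fun j _ => ?_
      exact split i j
    rw [this]
    simp only [Finset.sum_add_distrib]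
    rw [hswap]
    have hd : ∑ i : Fin n, ∑ j : Fin n, (if i = j then g i j else 0) = 0 := by
      refine Finset.sum_eq_zero fun i _ => ?_
      rw [Finset.sum_ite_eq]
      simp [hdiag]
    rw [hd, hτs']
    ring
  -- closed form for the double sum
  have hones : ∀ i : Fin n, ∑ j : Fin n, (if i = j then (0:ℝ) else 1)
      = (n : ℝ) - 1 := by
    intro i
    have : ∑ j : Fin n, (if i = j then (0:ℝ) else 1)
        = ∑ j : Fin n, (1 - if i = j then (1:ℝ) else 0) := by
      refine Finset.sum_congr rfl fun j _ => ?_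
      by_cases h : i = j <;> simp [h]
    rw [this, Finset.sum_sub_distrib]
    simp
  have hParseval : ∀ i : Fin n, ∑ j : Fin n, ⟪C (X i), X j⟫ ^ 2
      = ‖C (X i)‖ ^ 2 := by
    intro i
    have h := X.sum_inner_mul_inner (C (X i)) (C (X i))
    have : ∑ j : Fin n, ⟪C (X i), X j⟫ ^ 2
        = ∑ j : Fin n, ⟪C (X i), X j⟫ * ⟪X j, C (X i)⟫ := by
      refine Finset.sum_congr rfl fun j _ => ?_
      rw [sq, real_inner_comm (X j)]
    rw [this, h, real_inner_self_eq_norm_sq]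
  set SA : ℝ := ∑ i : Fin n, ∑ j : Fin n, ‖A (X i) (X j)‖ ^ 2 with hSA
  have hmain : 2 * τs = (c + 3) / 4 * ((n : ℝ) * ((n : ℝ) - 1))
      + 3 / 4 * (c - 1) * (∑ i, ‖C (X i)‖ ^ 2) - 3 * SA := by
    rw [← htot]
    have : ∑ i, ∑ j, g i j
        = ∑ i, ∑ j, ((c + 3) / 4 * (if i = j then (0:ℝ) else 1)
            + 3 * ((c - 1) / 4) * ⟪C (X i), X j⟫ ^ 2
            - 3 * ‖A (X i) (X j)‖ ^ 2) := by
      refine Finset.sum_congr rfl fun i _ => Finset.sum_congr rfl fun j _ => ?_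
      exact key i j
    rw [this]
    have expand : ∀ i : Fin n,
        ∑ j, ((c + 3) / 4 * (if i = j then (0:ℝ) else 1)
            + 3 * ((c - 1) / 4) * ⟪C (X i), X j⟫ ^ 2
            - 3 * ‖A (X i) (X j)‖ ^ 2)
        = (c + 3) / 4 * ((n : ℝ) - 1)
          + 3 * ((c - 1) / 4) * ‖C (X i)‖ ^ 2
          - 3 * ∑ j, ‖A (X i) (X j)‖ ^ 2 := by
      intro i
      rw [Finset.sum_sub_distrib, Finset.sum_add_distrib,
        ← Finset.mul_sum, ← Finset.mul_sum, ← Finset.mul_sum,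
        hones i, hParseval i]
    rw [Finset.sum_congr rfl fun i _ => expand i]
    rw [Finset.sum_sub_distrib, Finset.sum_add_distrib, ← Finset.mul_sum]
    simp only [Finset.sum_const, Finset.card_univ, Fintype.card_fin, nsmul_eq_mul]
    rw [hSA]
    simp only [← Finset.mul_sum]
    ring
  have hSAnn : 0 ≤ SA := by
    refine Finset.sum_nonneg fun i _ => Finset.sum_nonneg fun j _ => ?_
    positivity
  constructor
  · linarith
  · constructor
    · intro heq
      have hSA0 : SA = 0 := by linarith
      have hall : ∀ i j : Fin n, A (X i) (X j) = 0 := by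
        intro i j
        have h1 : ∀ i ∈ Finset.univ, (0:ℝ) ≤ ∑ j : Fin n, ‖A (X i) (X j)‖ ^ 2 :=
          fun i _ => Finset.sum_nonneg fun j _ => by positivity
        have h2 := (Finset.sum_eq_zero_iff_of_nonneg h1).mp hSA0 i (Finset.mem_univ i)
        have h3 : ∀ j ∈ Finset.univ, (0:ℝ) ≤ ‖A (X i) (X j)‖ ^ 2 :=
          fun j _ => by positivity
        have h4 := (Finset.sum_eq_zero_iff_of_nonneg h3).mp h2 j (Finset.mem_univ j)
        have : ‖A (X i) (X j)‖ = 0 := by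
          have := sq_eq_zero_iff.mp h4
          exact this
        exact norm_eq_zero.mp this
      apply X.toBasis.ext
      intro i
      apply X.toBasis.ext
      intro j
      simpa [OrthonormalBasis.coe_toBasis] using hall i j
    · intro hA0
      have : SA = 0 := by
        rw [hSA]
        refine Finset.sum_eq_zero fun i _ => Finset.sum_eq_zero fun j _ => ?_
        simp [hA0]
      linarith
end

section
/- 2τ* = ((c+3)/4) n(n−1) + (3/4)(c−1) Σ_{i=1}^n ‖C X_i‖² − 3 Σ_{i=1}^n Σ_{j=1}^n ‖A(X_i, X_j)‖². -/
open scoped RealInnerProductSpace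

lemma double_sum_sym {n : ℕ} (f : Fin n → Fin n → ℝ)
    (hsym : ∀ i j, f i j = f j i) (hdiag : ∀ i, f i i = 0) :
    ∑ i, ∑ j, f i j = 2 * ∑ i, ∑ j ∈ Finset.univ.filter (fun j => i < j), f i j := by
  have hsplit : ∀ i j : Fin n, f i j =
      (if i < j then f i j else 0) + (if j < i then f i j else 0) := by
    intro i j
    rcases lt_trichotomy i j with h | h | h
    · simp [h, h.asymm]
    · subst h; simp [hdiag]
    · simp [h, h.asymm]
  have h1 : ∑ i, ∑ j, f i j =
      (∑ i, ∑ j, if i < j then f i j else 0) + (∑ i, ∑ j, if j < i then f i j else 0) := by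
    rw [← Finset.sum_add_distrib]
    refine Finset.sum_congr rfl fun i _ => ?_
    rw [← Finset.sum_add_distrib]
    exact Finset.sum_congr rfl fun j _ => hsplit i j
  have h2 : (∑ i, ∑ j, if j < i then f i j else 0)
      = ∑ i, ∑ j, if i < j then f i j else 0 := by
    rw [Finset.sum_comm]
    refine Finset.sum_congr rfl fun i _ => Finset.sum_congr rfl fun j _ => ?_
    by_cases h : i < j <;> simp [h, hsym]
  have h3 : ∀ i : Fin n, (∑ j, if i < j then f i j else 0)
      = ∑ j ∈ Finset.univ.filter (fun j => i < j), f i j := by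
    intro i; rw [Finset.sum_filter]
  rw [h1, h2]
  simp only [h3]
  ring

/-- Scalar curvature identity for the horizontal distribution (vertical Reeb vector field). -/
theorem stmt_7 {H V : Type*} [NormedAddCommGroup H] [InnerProductSpace ℝ H]
    [NormedAddCommGroup V] [InnerProductSpace ℝ V]
    (c : ℝ) (n : ℕ) (hn : 0 < n)
    (X : OrthonormalBasis (Fin n) ℝ H)
    (C : H →ₗ[ℝ] H) (hC : ∀ x y, ⟪C x, y⟫ = -⟪x, C y⟫)
    (A : H →ₗ[ℝ] H →ₗ[ℝ] V) (hA : ∀ x y, A x y = -A y x)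
    (Rstar : H → H → H → H → ℝ)
    (hRstar : ∀ x y z w, Rstar x y z w =
      (c + 3) / 4 * (⟪y, z⟫ * ⟪x, w⟫ - ⟪x, z⟫ * ⟪y, w⟫)
        + (c - 1) / 4 * (⟪C y, z⟫ * ⟪C x, w⟫ - ⟪C y, w⟫ * ⟪C x, z⟫
            - 2 * ⟪w, C z⟫ * ⟪C x, y⟫)
        + 2 * ⟪A x y, A z w⟫ - ⟪A y z, A x w⟫ + ⟪A x z, A y w⟫)
    (τs : ℝ) (hτs : τs = ∑ i, ∑ j ∈ Finset.univ.filter (fun j => i < j),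
      Rstar (X i) (X j) (X j) (X i)) :
    2 * τs = (c + 3) / 4 * ((n : ℝ) * ((n : ℝ) - 1))
      + 3 / 4 * (c - 1) * ∑ i, ‖C (X i)‖ ^ 2
      - 3 * ∑ i, ∑ j, ‖A (X i) (X j)‖ ^ 2 := by
  have hCself : ∀ x : H, ⟪C x, x⟫ = 0 := by
    intro x
    have h := hC x x
    have h' := real_inner_comm (C x) x
    linarith
  have hAself : ∀ x : H, A x x = 0 := by
    intro x
    have h := hA x x
    have h2 : (2:ℝ) • A x x = 0 := by
      rw [two_smul]; nth_rewrite 1 [h]; abel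
    exact (smul_eq_zero.mp h2).resolve_left (by norm_num)
  have honb : ∀ i j : Fin n, ⟪X i, X j⟫ = if i = j then (1:ℝ) else 0 :=
    fun i j => orthonormal_iff_ite.mp X.orthonormal i j
  -- pointwise formula
  have hkey : ∀ i j : Fin n, Rstar (X i) (X j) (X j) (X i) =
      (c + 3) / 4 * (1 - (if i = j then (1:ℝ) else 0))
        + 3 * ((c - 1) / 4) * ⟪C (X i), X j⟫ ^ 2 - 3 * ‖A (X i) (X j)‖ ^ 2 := by
    intro i j
    rw [hRstar]
    have e1 : ⟪C (X j), X j⟫ = 0 := hCself _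
    have e2 : ⟪C (X j), X i⟫ = -⟪C (X i), X j⟫ := by
      rw [hC, real_inner_comm, hC]
    have e3 : ⟪X i, C (X j)⟫ = -⟪C (X i), X j⟫ := by
      have := hC (X i) (X j); linarith
    have e4 : A (X j) (X j) = (0 : V) := hAself _
    have e5 : A (X j) (X i) = -A (X i) (X j) := by rw [hA]
    have e6 : ⟪A (X i) (X j), A (X i) (X j)⟫ = ‖A (X i) (X j)‖ ^ 2 :=
      real_inner_self_eq_norm_sq _
    have e7 : ⟪X j, X j⟫ = (1:ℝ) := by rw [honb]; simp
    have e8 : ⟪X i, X i⟫ = (1:ℝ) := by rw [honb]; simp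
    have e9 : ⟪X i, X j⟫ * ⟪X j, X i⟫ = (if i = j then (1:ℝ) else 0) := by
      rw [honb, real_inner_comm, honb]
      by_cases h : i = j <;> simp [h]
    rw [e1, e2, e4, e5, e7, e8, e9, inner_neg_right, e6, inner_zero_left]
    rw [e3]
    ring
  have hsym : ∀ i j : Fin n, Rstar (X i) (X j) (X j) (X i)
      = Rstar (X j) (X i) (X i) (X j) := by
    intro i j
    rw [hkey i j, hkey j i]
    have d : (if i = j then (1:ℝ) else 0) = (if j = i then (1:ℝ) else 0) := by
      by_cases h : i = j <;> simp [h, Ne.symm, eq_comm]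
    have c1 : ⟪C (X j), X i⟫ = -⟪C (X i), X j⟫ := by
      rw [hC, real_inner_comm, hC]
    have a1 : ‖A (X j) (X i)‖ = ‖A (X i) (X j)‖ := by rw [hA]; simp
    rw [d, c1, a1]
    ring
  have hdiag : ∀ i : Fin n, Rstar (X i) (X i) (X i) (X i) = 0 := by
    intro i
    rw [hkey i i, hCself, hAself]
    simp
  -- 2τ as a full double sum
  have h2τ : 2 * τs = ∑ i, ∑ j, Rstar (X i) (X j) (X j) (X i) := by
    rw [hτs, double_sum_sym (fun i j => Rstar (X i) (X j) (X j) (X i)) hsym hdiag]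
  rw [h2τ]
  -- evaluate the double sum
  have hrow : ∀ i : Fin n, ∑ j, Rstar (X i) (X j) (X j) (X i)
      = (c + 3) / 4 * ((n : ℝ) - 1) + 3 * ((c - 1) / 4) * ‖C (X i)‖ ^ 2
        - 3 * ∑ j, ‖A (X i) (X j)‖ ^ 2 := by
    intro i
    have hprsv : ∑ j, ⟪C (X i), X j⟫ ^ 2 = ‖C (X i)‖ ^ 2 := by
      have := X.sum_inner_mul_inner (C (X i)) (C (X i))
      rw [← real_inner_self_eq_norm_sq]
      rw [← this]
      refine Finset.sum_congr rfl fun j _ => ?_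
      rw [sq, real_inner_comm (X j) (C (X i))]
    have hδ : ∑ j : Fin n, (if i = j then (1:ℝ) else 0) = 1 := by
      simp
    calc ∑ j, Rstar (X i) (X j) (X j) (X i)
        = ∑ j : Fin n, ((c + 3) / 4 * (1 - (if i = j then (1:ℝ) else 0))
            + 3 * ((c - 1) / 4) * ⟪C (X i), X j⟫ ^ 2 - 3 * ‖A (X i) (X j)‖ ^ 2) :=
          Finset.sum_congr rfl fun j _ => hkey i j
      _ = (c + 3) / 4 * ((n : ℝ) - 1) + 3 * ((c - 1) / 4) * ‖C (X i)‖ ^ 2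
            - 3 * ∑ j, ‖A (X i) (X j)‖ ^ 2 := by
          rw [← hprsv, Finset.sum_sub_distrib, Finset.sum_add_distrib]
          simp only [← Finset.mul_sum]
          rw [Finset.sum_sub_distrib, hδ, Finset.sum_const, Finset.card_univ,
            Fintype.card_fin, nsmul_eq_mul, mul_one]
  calc ∑ i, ∑ j, Rstar (X i) (X j) (X j) (X i)
      = ∑ i : Fin n, ((c + 3) / 4 * ((n : ℝ) - 1) + 3 * ((c - 1) / 4) * ‖C (X i)‖ ^ 2
          - 3 * ∑ j, ‖A (X i) (X j)‖ ^ 2) := Finset.sum_congr rfl fun i _ => hrow i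
    _ = (c + 3) / 4 * ((n : ℝ) * ((n : ℝ) - 1))
          + 3 / 4 * (c - 1) * ∑ i, ‖C (X i)‖ ^ 2
          - 3 * ∑ i, ∑ j, ‖A (X i) (X j)‖ ^ 2 := by
        rw [Finset.sum_sub_distrib, Finset.sum_add_distrib]
        simp only [← Finset.mul_sum]
        rw [Finset.sum_const, Finset.card_univ, Fintype.card_fin, nsmul_eq_mul]
        ring
end

section
/- Ric*(X_1) ≤ ((c+3)/4)(n−1) + (3/4)(c−1) ‖C X_1‖², and equality holds if and only if A(X_1, X_j) = 0 for all j = 2, …, n. -/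
open scoped RealInnerProductSpace

/-- Chen–Ricci inequality for the horizontal distribution (vertical Reeb vector field). -/
theorem stmt_8 {H V : Type*} [NormedAddCommGroup H] [InnerProductSpace ℝ H]
    [NormedAddCommGroup V] [InnerProductSpace ℝ V]
    (c : ℝ) (n : ℕ) (hn : 0 < n)
    (X : OrthonormalBasis (Fin n) ℝ H)
    (C : H →ₗ[ℝ] H) (hC : ∀ x y, ⟪C x, y⟫ = -⟪x, C y⟫)
    (A : H →ₗ[ℝ] H →ₗ[ℝ] V) (hA : ∀ x y, A x y = -A y x)
    (Rstar : H → H → H → H → ℝ)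
    (hRstar : ∀ x y z w, Rstar x y z w =
      (c + 3) / 4 * (⟪y, z⟫ * ⟪x, w⟫ - ⟪x, z⟫ * ⟪y, w⟫)
        + (c - 1) / 4 * (⟪C y, z⟫ * ⟪C x, w⟫ - ⟪C y, w⟫ * ⟪C x, z⟫
            - 2 * ⟪w, C z⟫ * ⟪C x, y⟫)
        + 2 * ⟪A x y, A z w⟫ - ⟪A y z, A x w⟫ + ⟪A x z, A y w⟫)
    (Rics : H → ℝ) (hRics : ∀ x, Rics x = ∑ s, Rstar x (X s) (X s) x) :
    (Rics (X ⟨0, hn⟩) ≤ (c + 3) / 4 * ((n : ℝ) - 1)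
        + 3 / 4 * (c - 1) * ‖C (X ⟨0, hn⟩)‖ ^ 2) ∧
    ((Rics (X ⟨0, hn⟩) = (c + 3) / 4 * ((n : ℝ) - 1)
        + 3 / 4 * (c - 1) * ‖C (X ⟨0, hn⟩)‖ ^ 2) ↔
      ∀ j : Fin n, j ≠ ⟨0, hn⟩ → A (X ⟨0, hn⟩) (X j) = 0) := by
  set x0 := X ⟨0, hn⟩ with hx0
  have hAalt : ∀ x : H, A x x = 0 := by
    intro x
    have h := hA x x
    have h2 : (2 : ℝ) • A x x = 0 := by
      rw [two_smul]; nth_rewrite 1 [h]; exact neg_add_cancel _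
    simpa using (smul_eq_zero.mp h2).resolve_left (by norm_num)
  have hCs : ∀ x : H, ⟪C x, x⟫ = 0 := by
    intro x
    have h1 := hC x x
    have h2 := real_inner_comm x (C x)
    linarith
  -- the key computation of the Ricci curvature
  have hterm : ∀ s, Rstar x0 (X s) (X s) x0 =
      (c + 3) / 4 * (1 - ⟪x0, X s⟫ * ⟪X s, x0⟫)
      + 3 * ((c - 1) / 4) * (⟪C x0, X s⟫ * ⟪X s, C x0⟫)
      - 3 * ‖A x0 (X s)‖ ^ 2 := by
    intro s
    rw [hRstar]
    have h0 : ⟪x0, x0⟫ = (1 : ℝ) := by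
      have := X.orthonormal.1 ⟨0, hn⟩
      rw [← hx0] at this
      rw [real_inner_self_eq_norm_sq, this]; norm_num
    have h1 : ⟪X s, X s⟫ = (1 : ℝ) := by
      have := X.orthonormal.1 s
      rw [real_inner_self_eq_norm_sq, this]; norm_num
    have h2 : ⟪C (X s), X s⟫ = 0 := hCs _
    have h3 : ⟪C x0, x0⟫ = 0 := hCs _
    have h4 : ⟪C (X s), x0⟫ = -⟪C x0, X s⟫ := by
      rw [hC, real_inner_comm]
    have h5 : ⟪x0, C (X s)⟫ = -⟪C x0, X s⟫ := by
      rw [real_inner_comm, h4]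
    have h6 : A (X s) x0 = -(A x0 (X s)) := hA _ _
    have h7 : ⟪x0, X s⟫ * ⟪X s, x0⟫ = ⟪x0, X s⟫ * ⟪x0, X s⟫ := by
      rw [real_inner_comm (X s) x0]
    have h8 : ⟪C x0, X s⟫ * ⟪X s, C x0⟫ = ⟪C x0, X s⟫ * ⟪C x0, X s⟫ := by
      rw [real_inner_comm (X s) (C x0)]
    rw [h0, h1, h2, h3, h4, h5, h6, h7, h8, hAalt, hAalt]
    simp only [inner_neg_left, inner_neg_right, inner_zero_left, inner_zero_right]
    rw [real_inner_self_eq_norm_sq, real_inner_comm (X s) x0]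
    ring
  have hP1 : ∑ s, ⟪x0, X s⟫ * ⟪X s, x0⟫ = 1 := by
    rw [X.sum_inner_mul_inner x0 x0, real_inner_self_eq_norm_sq]
    have := X.orthonormal.1 ⟨0, hn⟩
    rw [← hx0] at this
    rw [this]; norm_num
  have hP2 : ∑ s, ⟪C x0, X s⟫ * ⟪X s, C x0⟫ = ‖C x0‖ ^ 2 := by
    rw [X.sum_inner_mul_inner, real_inner_self_eq_norm_sq]
  have hsum : Rics x0 = (c + 3) / 4 * ((n : ℝ) - 1)
      + 3 / 4 * (c - 1) * ‖C x0‖ ^ 2 - 3 * ∑ s, ‖A x0 (X s)‖ ^ 2 := by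
    rw [hRics]
    calc ∑ s, Rstar x0 (X s) (X s) x0
        = ∑ s, ((c + 3) / 4 * (1 - ⟪x0, X s⟫ * ⟪X s, x0⟫)
          + 3 * ((c - 1) / 4) * (⟪C x0, X s⟫ * ⟪X s, C x0⟫)
          - 3 * ‖A x0 (X s)‖ ^ 2) := Finset.sum_congr rfl fun s _ => hterm s
      _ = (c + 3) / 4 * ((n : ℝ) * 1 - ∑ s, ⟪x0, X s⟫ * ⟪X s, x0⟫)
          + 3 * ((c - 1) / 4) * (∑ s, ⟪C x0, X s⟫ * ⟪X s, C x0⟫)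
          - 3 * ∑ s, ‖A x0 (X s)‖ ^ 2 := by
        simp [Finset.sum_sub_distrib, Finset.sum_add_distrib, Finset.mul_sum,
          Finset.sum_sub_distrib, mul_sub]
        ring
      _ = _ := by rw [hP1, hP2]; ring
  have hS0 : (0 : ℝ) ≤ ∑ s, ‖A x0 (X s)‖ ^ 2 :=
    Finset.sum_nonneg fun s _ => sq_nonneg _
  constructor
  · rw [hsum]; linarith
  · constructor
    · intro heq j hj
      have hS : ∑ s, ‖A x0 (X s)‖ ^ 2 = 0 := by rw [hsum] at heq; linarith
      have := (Finset.sum_eq_zero_iff_of_nonneg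
        (fun s _ => sq_nonneg ‖A x0 (X s)‖)).mp hS j (Finset.mem_univ j)
      have hn0 : ‖A x0 (X j)‖ = 0 := by
        have := sq_eq_zero_iff.mp this
        exact this
      exact norm_eq_zero.mp hn0
    · intro hAz
      have hS : ∑ s, ‖A x0 (X s)‖ ^ 2 = 0 := by
        apply Finset.sum_eq_zero
        intro s _
        by_cases hs : s = ⟨0, hn⟩
        · subst hs; rw [← hx0, hAalt]; simp
        · rw [hAz s hs]; simp
      rw [hsum, hS]; ring
end

section
/- 2τ̂ ≥ ((c+3)/4) r(r−1) − ‖N‖² (that is, 2τ̂ ≥ ((c+3)/4) r(r−1) − r²‖H‖²), and equality holds if and only if T = 0 (i.e. each fiber is totally geodesic). -/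
open scoped RealInnerProductSpace

/-- Scalar curvature inequality for the fibers (horizontal Reeb vector field). -/
theorem stmt_9 {V W : Type*} [NormedAddCommGroup V] [InnerProductSpace ℝ V]
    [NormedAddCommGroup W] [InnerProductSpace ℝ W]
    (c : ℝ) (r : ℕ) (hr : 0 < r)
    (U : OrthonormalBasis (Fin r) ℝ V)
    (T : V →ₗ[ℝ] V →ₗ[ℝ] W) (hT : ∀ X Y, T X Y = T Y X)
    (N : W) (hN : N = ∑ j, T (U j) (U j))
    (Rhat : V → V → V → V → ℝ)
    (hRhat : ∀ X Y Z W', Rhat X Y Z W' =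
      (c + 3) / 4 * (⟪Y, Z⟫ * ⟪X, W'⟫ - ⟪X, Z⟫ * ⟪Y, W'⟫)
        - ⟪T X W', T Y Z⟫ + ⟪T Y W', T X Z⟫)
    (τ : ℝ) (hτ : τ = ∑ i, ∑ j ∈ Finset.univ.filter (fun j => i < j),
      Rhat (U i) (U j) (U j) (U i)) :
    (2 * τ ≥ (c + 3) / 4 * ((r : ℝ) * ((r : ℝ) - 1)) - ‖N‖ ^ 2) ∧
    ((2 * τ = (c + 3) / 4 * ((r : ℝ) * ((r : ℝ) - 1)) - ‖N‖ ^ 2) ↔ T = 0) := by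
  classical
  set f : Fin r → Fin r → ℝ := fun i j => Rhat (U i) (U j) (U j) (U i) with hf
  have hinner : ∀ i j : Fin r, ⟪U i, U j⟫ = if i = j then (1 : ℝ) else 0 :=
    orthonormal_iff_ite.mp U.orthonormal
  have hdiag : ∀ i, f i i = 0 := by
    intro i; simp only [hf, hRhat]; ring
  have hsymf : ∀ i j, f i j = f j i := by
    intro i j
    simp only [hf, hRhat, real_inner_comm (T (U i) (U i)) (T (U j) (U j)),
      real_inner_comm (T (U j) (U i)) (T (U i) (U j))]
    ring
  -- the double sum equals 2τ
  have h2τ : ∑ i, ∑ j, f i j = 2 * τ := by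
    have step : ∀ i j : Fin r, f i j =
        (if i < j then f i j else 0) + (if j < i then f i j else 0)
          + (if i = j then f i j else 0) := by
      intro i j
      rcases lt_trichotomy i j with h | h | h
      · simp [h, asymm h, h.ne]
      · simp [h]
      · simp [h, asymm h, h.ne']
    have hτ' : τ = ∑ i, ∑ j, if i < j then f i j else 0 := by
      rw [hτ]
      exact Finset.sum_congr rfl fun i _ => Finset.sum_filter _ _
    calc ∑ i, ∑ j, f i j
        = ∑ i, ∑ j, ((if i < j then f i j else 0) + (if j < i then f i j else 0)
            + (if i = j then f i j else 0)) := by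
          exact Finset.sum_congr rfl fun i _ => Finset.sum_congr rfl fun j _ => step i j
      _ = (∑ i, ∑ j, if i < j then f i j else 0)
            + (∑ i, ∑ j, if j < i then f i j else 0)
            + (∑ i, ∑ j, if i = j then f i j else 0) := by
          simp [Finset.sum_add_distrib]
      _ = 2 * τ := by
          have hB : (∑ i, ∑ j, if j < i then f i j else 0)
              = ∑ i, ∑ j, if i < j then f i j else 0 := by
            rw [Finset.sum_comm]
            exact Finset.sum_congr rfl fun i _ => Finset.sum_congr rfl fun j _ => by
              by_cases h : i < j <;> simp [h, hsymf i j]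
          have hC : (∑ i, ∑ j, if i = j then f i j else 0) = 0 := by
            refine Finset.sum_eq_zero fun i _ => ?_
            rw [Finset.sum_ite_eq]
            simp [hdiag i]
          rw [hB, hC, hτ']; ring
  -- compute the double sum explicitly
  set S : ℝ := ∑ i, ∑ j, ‖T (U i) (U j)‖ ^ 2 with hSdef
  have hS3 : ∀ i j : Fin r, ⟪T (U j) (U i), T (U i) (U j)⟫ = ‖T (U i) (U j)‖ ^ 2 := by
    intro i j
    rw [hT (U j) (U i), real_inner_self_eq_norm_sq]
  have hδ : ∀ i j : Fin r,
      ⟪U j, U j⟫ * ⟪U i, U i⟫ - ⟪U i, U j⟫ * ⟪U j, U i⟫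
        = 1 - (if i = j then (1 : ℝ) else 0) := by
    intro i j
    simp only [hinner]
    by_cases h : i = j
    · simp [h]
    · simp [h, Ne.symm h]
  have hG : ∀ i : Fin r,
      (∑ j, (⟪U j, U j⟫ * ⟪U i, U i⟫ - ⟪U i, U j⟫ * ⟪U j, U i⟫)) = (r : ℝ) - 1 := by
    intro i
    calc (∑ j, (⟪U j, U j⟫ * ⟪U i, U i⟫ - ⟪U i, U j⟫ * ⟪U j, U i⟫))
        = ∑ j, ((1 : ℝ) - if i = j then 1 else 0) :=
          Finset.sum_congr rfl fun j _ => hδ i j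
      _ = (r : ℝ) - 1 := by
          rw [Finset.sum_sub_distrib, Finset.sum_ite_eq]
          simp
  have hNN : ∑ i, ∑ j, ⟪T (U i) (U i), T (U j) (U j)⟫ = ‖N‖ ^ 2 := by
    rw [← real_inner_self_eq_norm_sq, hN, sum_inner]
    exact Finset.sum_congr rfl fun i _ => (inner_sum _ _ _).symm
  have hmain : 2 * τ = (c + 3) / 4 * ((r : ℝ) * ((r : ℝ) - 1)) - ‖N‖ ^ 2 + S := by
    have expand : ∀ i j : Fin r, f i j =
        (c + 3) / 4 * (⟪U j, U j⟫ * ⟪U i, U i⟫ - ⟪U i, U j⟫ * ⟪U j, U i⟫)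
          - ⟪T (U i) (U i), T (U j) (U j)⟫ + ‖T (U i) (U j)‖ ^ 2 := by
      intro i j
      simp only [hf, hRhat, hS3 i j]
    rw [← h2τ]
    calc ∑ i, ∑ j, f i j
        = ∑ i, ∑ j, ((c + 3) / 4 * (⟪U j, U j⟫ * ⟪U i, U i⟫ - ⟪U i, U j⟫ * ⟪U j, U i⟫)
            - ⟪T (U i) (U i), T (U j) (U j)⟫ + ‖T (U i) (U j)‖ ^ 2) :=
          Finset.sum_congr rfl fun i _ => Finset.sum_congr rfl fun j _ => expand i j
      _ = (∑ i, ∑ j, (c + 3) / 4 * (⟪U j, U j⟫ * ⟪U i, U i⟫ - ⟪U i, U j⟫ * ⟪U j, U i⟫))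
            - (∑ i, ∑ j, ⟪T (U i) (U i), T (U j) (U j)⟫) + S := by
          rw [hSdef]
          rw [← Finset.sum_sub_distrib, ← Finset.sum_add_distrib]
          refine Finset.sum_congr rfl fun i _ => ?_
          rw [← Finset.sum_sub_distrib, ← Finset.sum_add_distrib]
      _ = (c + 3) / 4 * ((r : ℝ) * ((r : ℝ) - 1)) - ‖N‖ ^ 2 + S := by
          rw [hNN]
          congr 1
          congr 1
          calc (∑ i, ∑ j : Fin r, (c + 3) / 4 * (⟪U j, U j⟫ * ⟪U i, U i⟫ - ⟪U i, U j⟫ * ⟪U j, U i⟫))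
              = ∑ i : Fin r, (c + 3) / 4 * ((r : ℝ) - 1) := by
                refine Finset.sum_congr rfl fun i _ => ?_
                rw [← Finset.mul_sum, hG i]
            _ = (c + 3) / 4 * ((r : ℝ) * ((r : ℝ) - 1)) := by
                rw [Finset.sum_const]
                simp [Finset.card_univ]
                ring
  have hSnonneg : 0 ≤ S := by
    refine Finset.sum_nonneg fun i _ => Finset.sum_nonneg fun j _ => ?_
    positivity
  constructor
  · linarith
  · constructor
    · intro heq
      have hS0 : S = 0 := by linarith
      have hzero : ∀ i j : Fin r, T (U i) (U j) = 0 := by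
        intro i j
        have h1 := (Finset.sum_eq_zero_iff_of_nonneg
          (fun i _ => Finset.sum_nonneg fun j _ => by positivity)).mp hS0 i (Finset.mem_univ i)
        have h2 := (Finset.sum_eq_zero_iff_of_nonneg
          (fun j _ => by positivity)).mp h1 j (Finset.mem_univ j)
        have := pow_eq_zero_iff (n := 2) (by norm_num) |>.mp h2
        exact norm_eq_zero.mp this
      refine Module.Basis.ext U.toBasis fun i => Module.Basis.ext U.toBasis fun j => ?_
      simpa using hzero i j
    · intro hT0
      have hS0 : S = 0 := by
        simp [hSdef, hT0]
      linarith
end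

section
/- 2τ* ≤ ((c+3)/4) n(n−1) + ((c−1)/4)(2 − 2n + 3 Σ_{i=1}^n ‖C X_i‖²) (in the geometric situation 2 − 2n + 3 Σ_i ‖C X_i‖² = 3 tr(φB) + n − 1), and equality holds if and only if A = 0 (i.e. the horizontal distribution is integrable). -/
open scoped RealInnerProductSpace

/-- Scalar curvature inequality for the horizontal distribution (horizontal Reeb vector field). -/
theorem stmt_10 {H V : Type*} [NormedAddCommGroup H] [InnerProductSpace ℝ H]
    [NormedAddCommGroup V] [InnerProductSpace ℝ V]
    (c : ℝ) (n : ℕ) (hn : 0 < n)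
    (X : OrthonormalBasis (Fin n) ℝ H)
    (ξ : H) (hξ : ‖ξ‖ = 1) (η : H → ℝ) (hη : ∀ x, η x = ⟪x, ξ⟫)
    (C : H →ₗ[ℝ] H) (hC : ∀ x y, ⟪C x, y⟫ = -⟪x, C y⟫)
    (A : H →ₗ[ℝ] H →ₗ[ℝ] V) (hA : ∀ x y, A x y = -A y x)
    (Rstar : H → H → H → H → ℝ)
    (hRstar : ∀ x y z w, Rstar x y z w =
      (c + 3) / 4 * (⟪y, z⟫ * ⟪x, w⟫ - ⟪x, z⟫ * ⟪y, w⟫)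
        + (c - 1) / 4 * (η x * η z * ⟪y, w⟫ - η y * η z * ⟪x, w⟫
            + η y * η w * ⟪x, z⟫ - η x * η w * ⟪y, z⟫
            + ⟪C y, z⟫ * ⟪C x, w⟫ - ⟪C y, w⟫ * ⟪C x, z⟫
            - 2 * ⟪w, C z⟫ * ⟪C x, y⟫)
        + 2 * ⟪A x y, A z w⟫ - ⟪A y z, A x w⟫ + ⟪A x z, A y w⟫)
    (τs : ℝ) (hτs : τs = ∑ i, ∑ j ∈ Finset.univ.filter (fun j => i < j),
      Rstar (X i) (X j) (X j) (X i)) :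
    (2 * τs ≤ (c + 3) / 4 * ((n : ℝ) * ((n : ℝ) - 1))
        + (c - 1) / 4 * (2 - 2 * (n : ℝ) + 3 * ∑ i, ‖C (X i)‖ ^ 2)) ∧
    ((2 * τs = (c + 3) / 4 * ((n : ℝ) * ((n : ℝ) - 1))
        + (c - 1) / 4 * (2 - 2 * (n : ℝ) + 3 * ∑ i, ‖C (X i)‖ ^ 2)) ↔ A = 0) := by
  classical
  -- basic facts
  have hCskew : ∀ x : H, ⟪C x, x⟫ = 0 := by
    intro x
    have h := hC x x
    have h2 : ⟪x, C x⟫ = ⟪C x, x⟫ := real_inner_comm _ _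
    linarith [h, h2.symm ▸ h]
  have hAxx : ∀ x : H, A x x = 0 := by
    intro x
    have h := hA x x
    have h2 : (2 : ℝ) • A x x = 0 := by
      rw [two_smul]
      nth_rewrite 1 [h]
      exact neg_add_cancel _
    exact (smul_eq_zero.mp h2).resolve_left (by norm_num)
  have hXd : ∀ i, ⟪X i, X i⟫ = (1 : ℝ) := fun i => by
    simp [real_inner_self_eq_norm_sq, X.orthonormal.1 i]
  -- closed form of the summand
  have hf : ∀ i j, Rstar (X i) (X j) (X j) (X i) =
      (c + 3) / 4 * (1 - ⟪X i, X j⟫ ^ 2)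
      + (c - 1) / 4 * (2 * (⟪X i, ξ⟫ * (⟪X j, ξ⟫ * ⟪X i, X j⟫)) - ⟪X j, ξ⟫ ^ 2
          - ⟪X i, ξ⟫ ^ 2 + 3 * ⟪C (X i), X j⟫ ^ 2)
      - 3 * ‖A (X i) (X j)‖ ^ 2 := by
    intro i j
    have h1 : ⟪C (X j), X i⟫ = -⟪C (X i), X j⟫ := by
      rw [hC, real_inner_comm]
    have h2 : ⟪X i, C (X j)⟫ = -⟪C (X i), X j⟫ := by
      rw [real_inner_comm, h1]
    have h3 : A (X j) (X i) = -A (X i) (X j) := hA _ _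
    have h4 : ⟪A (X i) (X j), A (X j) (X i)⟫ = -‖A (X i) (X j)‖ ^ 2 := by
      rw [h3, inner_neg_right, real_inner_self_eq_norm_sq]
    have h5 : ⟪A (X j) (X j), A (X i) (X i)⟫ = 0 := by
      rw [hAxx, inner_zero_left]
    have h6 : ⟪X j, X i⟫ = ⟪X i, X j⟫ := real_inner_comm _ _
    rw [hRstar, hη, hη, hXd, hXd, hCskew, h1, h2, h4, h5, h6]
    ring
  -- symmetry and vanishing diagonal
  have hsym : ∀ i j, Rstar (X i) (X j) (X j) (X i) = Rstar (X j) (X i) (X i) (X j) := by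
    intro i j
    have h1 : ⟪C (X j), X i⟫ = -⟪C (X i), X j⟫ := by rw [hC, real_inner_comm]
    have h3 : A (X j) (X i) = -A (X i) (X j) := hA _ _
    rw [hf i j, hf j i, real_inner_comm (X j) (X i), h1, h3, norm_neg]
    ring
  have hdiag : ∀ i, Rstar (X i) (X i) (X i) (X i) = 0 := by
    intro i
    rw [hf i i, hXd i, hCskew (X i), hAxx (X i)]
    simp only [norm_zero]
    ring
  -- double sum equals twice τs
  set f : Fin n → Fin n → ℝ := fun i j => Rstar (X i) (X j) (X j) (X i) with hfdef
  have hdouble : ∑ i, ∑ j, f i j = 2 * τs := by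
    have hsplit : ∀ i : Fin n, ∑ j, f i j =
        (∑ j ∈ Finset.univ.filter (fun j => i < j), f i j)
        + ∑ j ∈ Finset.univ.filter (fun j => j < i), f i j := by
      intro i
      rw [← Finset.sum_filter_add_sum_filter_not Finset.univ (fun j => i < j)]
      congr 1
      rw [Finset.sum_filter, Finset.sum_filter]
      apply Finset.sum_congr rfl
      intro j _
      rcases lt_trichotomy i j with h | h | h
      · simp [h, not_lt.mpr h.le, asymm h]
      · subst h; simp [lt_irrefl, hfdef, hdiag i]
      · simp [h, not_lt.mpr h.le, asymm h]
    have hswap : ∑ i, ∑ j ∈ Finset.univ.filter (fun j => j < i), f i j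
        = ∑ i, ∑ j ∈ Finset.univ.filter (fun j => i < j), f i j := by
      simp only [Finset.sum_filter]
      rw [Finset.sum_comm]
      apply Finset.sum_congr rfl
      intro i _
      apply Finset.sum_congr rfl
      intro j _
      by_cases h : i < j
      · simpa [h, hfdef] using hsym j i
      · simp [h]
    calc ∑ i, ∑ j, f i j
        = ∑ i, ((∑ j ∈ Finset.univ.filter (fun j => i < j), f i j)
            + ∑ j ∈ Finset.univ.filter (fun j => j < i), f i j) :=
          Finset.sum_congr rfl fun i _ => hsplit i
      _ = (∑ i, ∑ j ∈ Finset.univ.filter (fun j => i < j), f i j)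
            + ∑ i, ∑ j ∈ Finset.univ.filter (fun j => j < i), f i j :=
          Finset.sum_add_distrib
      _ = 2 * τs := by rw [hswap, hτs]; ring
  -- Parseval facts
  have hP1 : ∀ i, ∑ j, ⟪X i, X j⟫ ^ 2 = (1 : ℝ) := by
    intro i
    have h := X.sum_inner_mul_inner (X i) (X i)
    rw [hXd] at h
    rw [← h]
    apply Finset.sum_congr rfl
    intro j _
    rw [sq, real_inner_comm (X j) (X i)]
  have hP2 : ∀ i, ∑ j, ⟪X j, ξ⟫ * ⟪X i, X j⟫ = ⟪X i, ξ⟫ := by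
    intro i
    have h := X.sum_inner_mul_inner (X i) ξ
    rw [← h]
    apply Finset.sum_congr rfl
    intro j _
    ring
  have hP3 : ∑ j, ⟪X j, ξ⟫ ^ 2 = (1 : ℝ) := by
    have h := X.sum_inner_mul_inner ξ ξ
    have hξξ : ⟪ξ, ξ⟫ = (1 : ℝ) := by
      rw [real_inner_self_eq_norm_sq, hξ]; norm_num
    rw [hξξ] at h
    rw [← h]
    apply Finset.sum_congr rfl
    intro j _
    rw [sq, real_inner_comm (X j) ξ]
  have hP4 : ∀ i, ∑ j, ⟪C (X i), X j⟫ ^ 2 = ‖C (X i)‖ ^ 2 := by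
    intro i
    have h := X.sum_inner_mul_inner (C (X i)) (C (X i))
    rw [real_inner_self_eq_norm_sq] at h
    rw [← h]
    apply Finset.sum_congr rfl
    intro j _
    rw [sq, real_inner_comm (X j) (C (X i))]
  -- row sums
  have hrow : ∀ i, ∑ j, f i j =
      (c + 3) / 4 * ((n : ℝ) - 1)
      + (c - 1) / 4 * (2 * ⟪X i, ξ⟫ ^ 2 - 1 - (n : ℝ) * ⟪X i, ξ⟫ ^ 2 + 3 * ‖C (X i)‖ ^ 2)
      - 3 * ∑ j, ‖A (X i) (X j)‖ ^ 2 := by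
    intro i
    have step : ∑ j, f i j =
        (c + 3) / 4 * ((∑ j : Fin n, (1 : ℝ)) - ∑ j, ⟪X i, X j⟫ ^ 2)
        + (c - 1) / 4 * (2 * (⟪X i, ξ⟫ * ∑ j, ⟪X j, ξ⟫ * ⟪X i, X j⟫)
            - (∑ j, ⟪X j, ξ⟫ ^ 2) - (∑ j : Fin n, (1 : ℝ)) * ⟪X i, ξ⟫ ^ 2
            + 3 * ∑ j, ⟪C (X i), X j⟫ ^ 2)
        - 3 * ∑ j, ‖A (X i) (X j)‖ ^ 2 := by
      simp only [hfdef, Finset.mul_sum, Finset.sum_mul, ← Finset.sum_add_distrib,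
        ← Finset.sum_sub_distrib]
      apply Finset.sum_congr rfl
      intro j _
      rw [hf i j]
      ring
    rw [step, hP1, hP2, hP3, hP4]
    simp only [Finset.sum_const, Finset.card_univ, Fintype.card_fin, nsmul_eq_mul, mul_one]
    ring
  -- total sum
  set S : ℝ := ∑ i, ∑ j, ‖A (X i) (X j)‖ ^ 2 with hSdef
  have htotal : 2 * τs = (c + 3) / 4 * ((n : ℝ) * ((n : ℝ) - 1))
      + (c - 1) / 4 * (2 - 2 * (n : ℝ) + 3 * ∑ i, ‖C (X i)‖ ^ 2) - 3 * S := by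
    rw [← hdouble]
    have step : ∑ i, ∑ j, f i j =
        (∑ i : Fin n, (1 : ℝ)) * ((c + 3) / 4 * ((n : ℝ) - 1))
        + (c - 1) / 4 * ((2 - (n : ℝ)) * (∑ i, ⟪X i, ξ⟫ ^ 2)
            - (∑ i : Fin n, (1 : ℝ)) + 3 * ∑ i, ‖C (X i)‖ ^ 2)
        - 3 * S := by
      simp only [hSdef, Finset.mul_sum, Finset.sum_mul, ← Finset.sum_add_distrib,
        ← Finset.sum_sub_distrib]
      apply Finset.sum_congr rfl
      intro i _
      rw [hrow i]
      simp only [Finset.mul_sum]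
      ring
    rw [step, hP3]
    simp only [Finset.sum_const, Finset.card_univ, Fintype.card_fin, nsmul_eq_mul, mul_one]
    ring
  have hSnonneg : 0 ≤ S := by
    apply Finset.sum_nonneg
    intro i _
    apply Finset.sum_nonneg
    intro j _
    positivity
  constructor
  · rw [htotal]; linarith
  · constructor
    · intro heq
      have hS0 : S = 0 := by rw [htotal] at heq; linarith
      have h1 : ∀ i ∈ Finset.univ, ∑ j, ‖A (X i) (X j)‖ ^ 2 = (0 : ℝ) :=
        (Finset.sum_eq_zero_iff_of_nonneg (fun i _ => Finset.sum_nonneg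
          (fun j _ => by positivity))).mp hS0
      have hzero : ∀ i j, A (X i) (X j) = 0 := by
        intro i j
        have h2 := (Finset.sum_eq_zero_iff_of_nonneg
          (fun j _ => by positivity)).mp (h1 i (Finset.mem_univ i)) j (Finset.mem_univ j)
        have : ‖A (X i) (X j)‖ = 0 := by
          have := sq_eq_zero_iff.mp h2
          exact this
        exact norm_eq_zero.mp this
      apply Module.Basis.ext X.toBasis
      intro i
      apply Module.Basis.ext X.toBasis
      intro j
      simp only [OrthonormalBasis.coe_toBasis, LinearMap.zero_apply]
      exact hzero i j
    · intro hA0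
      rw [htotal, hSdef, hA0]
      simp
end

section
/- Ric*(X_1) ≤ ((c+3)/4)(n−1) + ((c−1)/4)((2−n) η(X_1)² − 1 + 3‖C X_1‖²), and equality holds if and only if A(X_1, X_j) = 0 for all j = 2, …, n. -/
open scoped RealInnerProductSpace

/-- Chen–Ricci inequality for the horizontal distribution (horizontal Reeb vector field). -/
theorem stmt_12 {H V : Type*} [NormedAddCommGroup H] [InnerProductSpace ℝ H]
    [NormedAddCommGroup V] [InnerProductSpace ℝ V]
    (c : ℝ) (n : ℕ) (hn : 0 < n)
    (X : OrthonormalBasis (Fin n) ℝ H)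
    (ξ : H) (hξ : ‖ξ‖ = 1) (η : H → ℝ) (hη : ∀ x, η x = ⟪x, ξ⟫)
    (C : H →ₗ[ℝ] H) (hC : ∀ x y, ⟪C x, y⟫ = -⟪x, C y⟫)
    (A : H →ₗ[ℝ] H →ₗ[ℝ] V) (hA : ∀ x y, A x y = -A y x)
    (Rstar : H → H → H → H → ℝ)
    (hRstar : ∀ x y z w, Rstar x y z w =
      (c + 3) / 4 * (⟪y, z⟫ * ⟪x, w⟫ - ⟪x, z⟫ * ⟪y, w⟫)
        + (c - 1) / 4 * (η x * η z * ⟪y, w⟫ - η y * η z * ⟪x, w⟫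
            + η y * η w * ⟪x, z⟫ - η x * η w * ⟪y, z⟫
            + ⟪C y, z⟫ * ⟪C x, w⟫ - ⟪C y, w⟫ * ⟪C x, z⟫
            - 2 * ⟪w, C z⟫ * ⟪C x, y⟫)
        + 2 * ⟪A x y, A z w⟫ - ⟪A y z, A x w⟫ + ⟪A x z, A y w⟫)
    (Rics : H → ℝ) (hRics : ∀ x, Rics x = ∑ s, Rstar x (X s) (X s) x) :
    (Rics (X ⟨0, hn⟩) ≤ (c + 3) / 4 * ((n : ℝ) - 1)
        + (c - 1) / 4 * ((2 - (n : ℝ)) * (η (X ⟨0, hn⟩)) ^ 2 - 1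
            + 3 * ‖C (X ⟨0, hn⟩)‖ ^ 2)) ∧
    ((Rics (X ⟨0, hn⟩) = (c + 3) / 4 * ((n : ℝ) - 1)
        + (c - 1) / 4 * ((2 - (n : ℝ)) * (η (X ⟨0, hn⟩)) ^ 2 - 1
            + 3 * ‖C (X ⟨0, hn⟩)‖ ^ 2)) ↔
      ∀ j : Fin n, j ≠ ⟨0, hn⟩ → A (X ⟨0, hn⟩) (X j) = 0) := by
  set x0 : H := X ⟨0, hn⟩ with hx0
  -- basic facts
  have hAself : ∀ x : H, A x x = 0 := by
    intro x
    have h := hA x x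
    have h2 : A x x + A x x = 0 := by nth_rewrite 1 [h]; abel
    rw [← two_smul ℝ, smul_eq_zero] at h2
    exact h2.resolve_left (by norm_num)
  have hCself : ∀ x : H, ⟪C x, x⟫ = 0 := by
    intro x
    have h := hC x x
    have h' := real_inner_comm x (C x)
    linarith
  have hnorm1 : ∀ s : Fin n, ⟪X s, X s⟫ = 1 := by
    intro s
    rw [real_inner_self_eq_norm_sq, X.orthonormal.1 s]; norm_num
  -- per-term computation
  have per : ∀ s : Fin n, Rstar x0 (X s) (X s) x0 =
      (c + 3) / 4 - (c + 3) / 4 * ⟪x0, X s⟫ ^ 2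
        + ((c - 1) / 4 * (2 * ⟪x0, ξ⟫)) * (⟪x0, X s⟫ * ⟪X s, ξ⟫)
        - (c - 1) / 4 * (⟪ξ, X s⟫ * ⟪X s, ξ⟫)
        - (c - 1) / 4 * ⟪x0, ξ⟫ ^ 2
        + ((c - 1) / 4 * 3) * (⟪C x0, X s⟫ * ⟪X s, C x0⟫)
        - 3 * ‖A x0 (X s)‖ ^ 2 := by
    intro s
    rw [hRstar]
    have h1 : ⟪C (X s), X s⟫ = 0 := hCself (X s)
    have h2 : ⟪C (X s), x0⟫ = -⟪C x0, X s⟫ := by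
      rw [hC, real_inner_comm]
    have h3 : ⟪x0, C (X s)⟫ = -⟪C x0, X s⟫ := by
      rw [real_inner_comm, h2]
    have h4 : A (X s) (X s) = 0 := hAself (X s)
    have h5 : A (X s) x0 = -A x0 (X s) := hA (X s) x0
    have h6 : ⟪A x0 (X s), A (X s) x0⟫ = -‖A x0 (X s)‖ ^ 2 := by
      rw [h5, inner_neg_right, real_inner_self_eq_norm_sq]
    have h7 : ⟪X s, x0⟫ = ⟪x0, X s⟫ := real_inner_comm _ _
    have h8 : η (X s) = ⟪X s, ξ⟫ := hη _
    have h9 : η x0 = ⟪x0, ξ⟫ := hη _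
    have h10 : ⟪X s, ξ⟫ = ⟪ξ, X s⟫ := real_inner_comm _ _
    have h11 : ⟪X s, C x0⟫ = ⟪C x0, X s⟫ := real_inner_comm _ _
    rw [h1, h4, h6, h7, h8, h9, hnorm1 s, hnorm1 ⟨0, hn⟩, h2, h3]
    simp only [inner_zero_left, inner_zero_right]
    rw [h10, h11]
    ring
  -- Parseval-type facts
  have p1 : ∑ s, ⟪x0, X s⟫ ^ 2 = 1 := by
    have := X.sum_inner_mul_inner x0 x0
    rw [real_inner_self_eq_norm_sq, X.orthonormal.1 ⟨0, hn⟩] at this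
    calc ∑ s, ⟪x0, X s⟫ ^ 2 = ∑ s, ⟪x0, X s⟫ * ⟪X s, x0⟫ := by
          refine Finset.sum_congr rfl fun s _ => ?_
          rw [real_inner_comm (X s) x0]; ring
      _ = 1 := by rw [this]; norm_num
  have p2 : ∑ s, ⟪x0, X s⟫ * ⟪X s, ξ⟫ = ⟪x0, ξ⟫ := X.sum_inner_mul_inner x0 ξ
  have p3 : ∑ s, ⟪ξ, X s⟫ * ⟪X s, ξ⟫ = 1 := by
    rw [X.sum_inner_mul_inner ξ ξ, real_inner_self_eq_norm_sq, hξ]; norm_num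
  have p4 : ∑ s, ⟪C x0, X s⟫ * ⟪X s, C x0⟫ = ‖C x0‖ ^ 2 := by
    rw [X.sum_inner_mul_inner, real_inner_self_eq_norm_sq]
  -- the key identity
  have key : Rics x0 = (c + 3) / 4 * ((n : ℝ) - 1)
      + (c - 1) / 4 * ((2 - (n : ℝ)) * (η x0) ^ 2 - 1 + 3 * ‖C x0‖ ^ 2)
      - 3 * ∑ s, ‖A x0 (X s)‖ ^ 2 := by
    rw [hRics, Finset.sum_congr rfl fun s _ => per s]
    simp only [Finset.sum_add_distrib, Finset.sum_sub_distrib, ← Finset.mul_sum,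
      Finset.sum_const, Finset.card_univ, Fintype.card_fin, nsmul_eq_mul]
    rw [p1, p2, p3, p4, hη]
    ring
  have hsumnn : (0 : ℝ) ≤ ∑ s, ‖A x0 (X s)‖ ^ 2 :=
    Finset.sum_nonneg fun s _ => sq_nonneg _
  constructor
  · rw [key]; linarith
  · rw [key]
    constructor
    · intro heq j _
      have hz : ∑ s, ‖A x0 (X s)‖ ^ 2 = 0 := by linarith
      have := (Finset.sum_eq_zero_iff_of_nonneg fun s _ => sq_nonneg ‖A x0 (X s)‖).mp hz
        j (Finset.mem_univ j)
      have : ‖A x0 (X j)‖ = 0 := by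
        exact pow_eq_zero_iff (n := 2) (by norm_num) |>.mp this
      exact norm_eq_zero.mp this
    · intro hall
      have hz : ∑ s, ‖A x0 (X s)‖ ^ 2 = 0 := by
        refine Finset.sum_eq_zero fun s _ => ?_
        by_cases hs : s = ⟨0, hn⟩
        · rw [hs, ← hx0, hAself]; simp
        · rw [hall s hs]; simp
      rw [hz]; ring
end

section
/- ((c+3)/4)(nr + n + r − 2) + ((c−1)/4)(3r − 4 − n − (r−2) η(U_1)² + 3‖C X_1‖²) ≤ R̂ic(U_1) + Ric*(X_1) + (1/4)‖N‖² + 3 Σ_{s=2}^n ‖A(X_1, X_s)‖² − δ + tV − aH. Equality holds if and only if T(U_1, U_1) = Σ_{j=2}^r T(U_j, U_j) and T(U_1, U_j) = 0 for all j = 2, …, r. -/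
/-!
Tracing the three Gauss-type curvature formulas against the orthonormal frames (Parseval) turns
each Ricci sum into constants plus terms in `T`, `C` and `A`: skewness of `C` produces
`3‖C X₁‖²`, alternation of `A` produces `-3 Σ ‖A(X₁, X_s)‖²`, and in the mixed sum
`‖φ U‖² = 1 - η(U)²` holds for vertical `U` because `φ` is skew with `φ² = -1 + η ⊗ ξ`.
What remains of the `T`-terms is `¼‖N‖² - ⟪N, T₁₁⟫ + Σ_j ‖T₁ⱼ‖²`, and writing
`N = T₁₁ + S` with `S = Σ_{j ≥ 2} T_jj` completes the square: it equals
`¼‖T₁₁ - S‖² + Σ_{j ≥ 2} ‖T₁ⱼ‖² ≥ 0`, which vanishes exactly in the stated equality case.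
-/

open scoped RealInnerProductSpace
open Finset

section Curvature

variable {ι : Type*} [Fintype ι] {V H : Type*} [NormedAddCommGroup V] [InnerProductSpace ℝ V]
  [NormedAddCommGroup H] [InnerProductSpace ℝ H]

noncomputable def fiberCurvature (c : ℝ) (e : V) (T : V →ₗ[ℝ] V →ₗ[ℝ] H) (x y z w : V) : ℝ :=
  (c + 3) / 4 * (⟪y, z⟫ * ⟪x, w⟫ - ⟪x, z⟫ * ⟪y, w⟫)
    + (c - 1) / 4 * (⟪x, e⟫ * ⟪z, e⟫ * ⟪y, w⟫ - ⟪y, e⟫ * ⟪z, e⟫ * ⟪x, w⟫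
        + ⟪y, e⟫ * ⟪w, e⟫ * ⟪x, z⟫ - ⟪x, e⟫ * ⟪w, e⟫ * ⟪y, z⟫)
    - ⟪T x w, T y z⟫ + ⟪T y w, T x z⟫

noncomputable def horizontalCurvature (c : ℝ) (C : H → H) (A : H →ₗ[ℝ] H →ₗ[ℝ] V)
    (x y z w : H) : ℝ :=
  (c + 3) / 4 * (⟪y, z⟫ * ⟪x, w⟫ - ⟪x, z⟫ * ⟪y, w⟫)
    + (c - 1) / 4 * (⟪C y, z⟫ * ⟪C x, w⟫ - ⟪C y, w⟫ * ⟪C x, z⟫ - 2 * ⟪w, C z⟫ * ⟪C x, y⟫)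
    + 2 * ⟪A x y, A z w⟫ - ⟪A y z, A x w⟫ + ⟪A x z, A y w⟫

theorem fiberCurvature_self {T : V →ₗ[ℝ] V →ₗ[ℝ] H} (hT : ∀ u v, T u v = T v u)
    (c : ℝ) (e x y : V) :
    fiberCurvature c e T x y y x =
      (c + 3) / 4 * (‖y‖ ^ 2 * ‖x‖ ^ 2 - ⟪x, y⟫ ^ 2)
        + (c - 1) / 4 * (2 * ⟪y, e⟫ * (⟪x, e⟫ * ⟪x, y⟫) - ⟪y, e⟫ ^ 2 * ‖x‖ ^ 2
            - ⟪x, e⟫ ^ 2 * ‖y‖ ^ 2)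
        - ⟪T x x, T y y⟫ + ‖T y x‖ ^ 2 := by
  simp only [fiberCurvature, real_inner_self_eq_norm_sq, real_inner_comm y x, hT x y]
  ring

theorem sum_fiberCurvature {T : V →ₗ[ℝ] V →ₗ[ℝ] H} (hT : ∀ u v, T u v = T v u)
    (c : ℝ) {e y : V} (he : ‖e‖ = 1) (hy : ‖y‖ = 1) (U : OrthonormalBasis ι ℝ V) :
    ∑ k, fiberCurvature c e T (U k) y y (U k) =
      (c + 3) / 4 * (Fintype.card ι - 1)
        + (c - 1) / 4 * ((2 - Fintype.card ι) * ⟪y, e⟫ ^ 2 - 1)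
        - ⟪∑ k, T (U k) (U k), T y y⟫ + ∑ k, ‖T y (U k)‖ ^ 2 := by
  have hmixed : ∑ k, ⟪U k, e⟫ * ⟪U k, y⟫ = ⟪e, y⟫ := by
    simpa only [real_inner_comm e] using U.sum_inner_mul_inner e y
  have hUy : ∑ k, ⟪U k, y⟫ ^ 2 = 1 := by rw [U.sum_sq_inner_right, hy, one_pow]
  have hUe : ∑ k, ⟪U k, e⟫ ^ 2 = 1 := by rw [U.sum_sq_inner_right, he, one_pow]
  simp only [fiberCurvature_self hT, U.orthonormal.1, hy, one_pow, mul_one, sum_inner,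
    sum_add_distrib, sum_sub_distrib, ← mul_sum, sum_const, card_univ, nsmul_eq_mul,
    hmixed, hUy, hUe, real_inner_comm e y]
  ring

theorem apply_self_eq_zero_of_antisymm {A : H →ₗ[ℝ] H →ₗ[ℝ] V} (hA : ∀ x y, A x y = -A y x)
    (x : H) : A x x = 0 := by
  have h := hA x x
  rw [eq_neg_iff_add_eq_zero, ← two_smul ℝ, smul_eq_zero] at h
  exact h.resolve_left two_ne_zero

theorem horizontalCurvature_self {C : H → H} (hC : ∀ x y, ⟪C x, y⟫ = -⟪C y, x⟫)
    {A : H →ₗ[ℝ] H →ₗ[ℝ] V} (hA : ∀ x y, A x y = -A y x) (c : ℝ) (x y : H) :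
    horizontalCurvature c C A x y y x =
      (c + 3) / 4 * (‖y‖ ^ 2 * ‖x‖ ^ 2 - ⟪x, y⟫ ^ 2) + 3 * ((c - 1) / 4) * ⟪C x, y⟫ ^ 2
        - 3 * ‖A x y‖ ^ 2 := by
  have hCy : ⟪C y, y⟫ = 0 := by linarith [hC y y]
  have hAy : A y y = 0 := apply_self_eq_zero_of_antisymm hA y
  simp only [horizontalCurvature, real_inner_self_eq_norm_sq, real_inner_comm y x, hCy, hAy,
    hC y x, real_inner_comm (C y) x, hA y x, inner_neg_right, inner_zero_left]
  ring

theorem sum_horizontalCurvature {C : H → H} (hC : ∀ x y, ⟪C x, y⟫ = -⟪C y, x⟫)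
    {A : H →ₗ[ℝ] H →ₗ[ℝ] V} (hA : ∀ x y, A x y = -A y x) (c : ℝ) {x : H} (hx : ‖x‖ = 1)
    (X : OrthonormalBasis ι ℝ H) :
    ∑ s, horizontalCurvature c C A x (X s) (X s) x =
      (c + 3) / 4 * (Fintype.card ι - 1) + 3 * ((c - 1) / 4) * ‖C x‖ ^ 2
        - 3 * ∑ s, ‖A x (X s)‖ ^ 2 := by
  have hXx : ∑ s, ⟪x, X s⟫ ^ 2 = 1 := by rw [X.sum_sq_inner_left, hx, one_pow]
  simp only [horizontalCurvature_self hC hA, X.orthonormal.1, hx, one_pow, one_mul,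
    sum_add_distrib, sum_sub_distrib, ← mul_sum, sum_const, card_univ, nsmul_eq_mul,
    hXx, X.sum_sq_inner_left]
  ring

end Curvature

section Ambient

variable {ι : Type*} [Fintype ι] {E : Type*} [NormedAddCommGroup E] [InnerProductSpace ℝ E]

noncomputable def sasakianCurvature (c : ℝ) (ξ : E) (φ : E →ₗ[ℝ] E) (x y z w : E) : ℝ :=
  (c + 3) / 4 * (⟪y, z⟫ * ⟪x, w⟫ - ⟪x, z⟫ * ⟪y, w⟫)
    + (c - 1) / 4 * (⟪x, ξ⟫ * ⟪z, ξ⟫ * ⟪y, w⟫ - ⟪y, ξ⟫ * ⟪z, ξ⟫ * ⟪x, w⟫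
        + ⟪y, ξ⟫ * ⟪w, ξ⟫ * ⟪x, z⟫ - ⟪x, ξ⟫ * ⟪w, ξ⟫ * ⟪y, z⟫
        + ⟪φ y, z⟫ * ⟪φ x, w⟫ - ⟪φ x, z⟫ * ⟪φ y, w⟫ - 2 * ⟪φ x, y⟫ * ⟪φ z, w⟫)

theorem OrthonormalBasis.sum_sq_inner_coe {K : Submodule ℝ E} (b : OrthonormalBasis ι ℝ K)
    {v : E} (hv : v ∈ K) : ∑ i, ⟪(b i : E), v⟫ ^ 2 = ‖v‖ ^ 2 :=
  b.sum_sq_inner_right ⟨v, hv⟩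

theorem inner_orthogonalProjection_comp_skew {K : Submodule ℝ E} [K.HasOrthogonalProjection]
    {φ : E →ₗ[ℝ] E} (hφ : ∀ y z, ⟪φ y, z⟫ = -⟪y, φ z⟫) {C : K → K}
    (hC : ∀ x, (C x : E) = K.orthogonalProjectionOnto (φ x)) (x y : K) :
    ⟪C x, y⟫ = -⟪C y, x⟫ := by
  have hCφ : ∀ x y : K, ⟪C x, y⟫ = ⟪φ x, (y : E)⟫ := fun x y => by
    rw [Submodule.coe_inner, hC, ← Submodule.coe_inner,
      Submodule.inner_orthogonalProjectionOnto_eq_of_mem_right]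
  rw [hCφ, hCφ, hφ, real_inner_comm]

theorem norm_sq_apply_of_skew_of_sq {φ : E →ₗ[ℝ] E} (hφ : ∀ y z, ⟪φ y, z⟫ = -⟪y, φ z⟫)
    {ξ : E} (hφ2 : ∀ y, φ (φ y) = -y + ⟪y, ξ⟫ • ξ) (v : E) :
    ‖φ v‖ ^ 2 = ‖v‖ ^ 2 - ⟪v, ξ⟫ ^ 2 := by
  rw [← real_inner_self_eq_norm_sq, hφ, hφ2, inner_add_right, inner_neg_right,
    inner_smul_right, real_inner_self_eq_norm_sq]
  ring

theorem sasakianCurvature_self {φ : E →ₗ[ℝ] E} (hφ : ∀ y z, ⟪φ y, z⟫ = -⟪y, φ z⟫)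
    (c : ℝ) {ξ x u : E} (hux : ⟪u, x⟫ = 0) (hxξ : ⟪x, ξ⟫ = 0) :
    sasakianCurvature c ξ φ x u u x =
      (c + 3) / 4 * (‖u‖ ^ 2 * ‖x‖ ^ 2)
        + (c - 1) / 4 * (3 * ⟪φ u, x⟫ ^ 2 - ⟪u, ξ⟫ ^ 2 * ‖x‖ ^ 2) := by
  have hφu : ⟪φ u, u⟫ = 0 := by linarith [hφ u u, real_inner_comm u (φ u)]
  simp only [sasakianCurvature, real_inner_self_eq_norm_sq, real_inner_comm u x, hux, hxξ,
    hφu, hφ x u, real_inner_comm x (φ u)]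
  ring

theorem sum_sum_sasakianCurvature {ι' : Type*} [Fintype ι'] {K : Submodule ℝ E}
    (U : OrthonormalBasis ι ℝ K) (X : OrthonormalBasis ι' ℝ Kᗮ) {ξ : E} (hξK : ξ ∈ K)
    (hξ : ‖ξ‖ = 1) {φ : E →ₗ[ℝ] E} (hφ : ∀ y z, ⟪φ y, z⟫ = -⟪y, φ z⟫)
    (hφ2 : ∀ y, φ (φ y) = -y + ⟪y, ξ⟫ • ξ) (hanti : ∀ v ∈ K, φ v ∈ Kᗮ) (c : ℝ) :
    ∑ i, ∑ k, sasakianCurvature c ξ φ (X i) (U k) (U k) (X i) =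
      Fintype.card ι' * Fintype.card ι * ((c + 3) / 4)
        + (c - 1) / 4 * (3 * Fintype.card ι - Fintype.card ι' - 3) := by
  have hU : ∀ k, ‖(U k : E)‖ = 1 := U.orthonormal.1
  have hX : ∀ i, ‖(X i : E)‖ = 1 := X.orthonormal.1
  have hφU : ∀ k, ∑ i, ⟪φ (U k), (X i : E)⟫ ^ 2 = 1 - ⟪(U k : E), ξ⟫ ^ 2 := fun k => by
    simp only [real_inner_comm _ (φ _), X.sum_sq_inner_coe (hanti _ (U k).2),
      norm_sq_apply_of_skew_of_sq hφ hφ2, hU, one_pow]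
  have hUξ : ∑ k, ⟪(U k : E), ξ⟫ ^ 2 = 1 := by rw [U.sum_sq_inner_coe hξK, hξ, one_pow]
  rw [sum_comm]
  simp only [sasakianCurvature_self hφ c
      (Submodule.inner_right_of_mem_orthogonal (U _).2 (X _).2)
      (Submodule.inner_left_of_mem_orthogonal hξK (X _).2), hU, hX, one_pow, mul_one,
    sum_add_distrib, sum_sub_distrib, ← mul_sum, sum_const, card_univ, nsmul_eq_mul, hφU, hUξ]
  ring

end Ambient

section Defect

variable {ι : Type*} [Fintype ι] [DecidableEq ι] {H : Type*} [NormedAddCommGroup H]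

theorem sum_eq_add_sum_filter_ne {M : Type*} [AddCommMonoid M] (f : ι → M) (i : ι) :
    ∑ k, f k = f i + ∑ k ∈ univ.filter (fun k => k ≠ i), f k := by
  rw [filter_ne', add_sum_erase _ _ (mem_univ i)]

noncomputable def chenDefect (t : ι → ι → H) (i : ι) : ℝ :=
  1 / 4 * ‖t i i - ∑ k ∈ univ.filter (fun k => k ≠ i), t k k‖ ^ 2
    + ∑ k ∈ univ.filter (fun k => k ≠ i), ‖t i k‖ ^ 2

theorem quarter_norm_sq_sub_inner_add_sum_norm_sq [InnerProductSpace ℝ H] (t : ι → ι → H)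
    (i : ι) :
    1 / 4 * ‖∑ k, t k k‖ ^ 2 - ⟪∑ k, t k k, t i i⟫ + ∑ k, ‖t i k‖ ^ 2 = chenDefect t i := by
  rw [chenDefect, sum_eq_add_sum_filter_ne (fun k => t k k) i,
    sum_eq_add_sum_filter_ne (fun k => ‖t i k‖ ^ 2) i, norm_add_sq_real, norm_sub_sq_real,
    inner_add_left, real_inner_self_eq_norm_sq, real_inner_comm (t i i)]
  ring

theorem chenDefect_nonneg (t : ι → ι → H) (i : ι) : 0 ≤ chenDefect t i := by
  unfold chenDefect
  positivity

theorem chenDefect_eq_zero_iff (t : ι → ι → H) (i : ι) :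
    chenDefect t i = 0 ↔
      t i i = ∑ k ∈ univ.filter (fun k => k ≠ i), t k k ∧ ∀ k, k ≠ i → t i k = 0 := by
  rw [chenDefect, add_eq_zero_iff_of_nonneg (by positivity) (by positivity),
    sum_eq_zero_iff_of_nonneg (fun _ _ => by positivity)]
  simp [sub_eq_zero]

end Defect

theorem le_and_eq_iff_of_eq_add {a b d : ℝ} {P : Prop} (h : b = a + d) (hd : 0 ≤ d)
    (hP : d = 0 ↔ P) : a ≤ b ∧ (a = b ↔ P) :=
  h ▸ ⟨le_add_of_nonneg_right hd, left_eq_add.trans hP⟩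

/-- Combined Chen–Ricci inequality for an anti-invariant Riemannian submersion
from a Sasakian space form with vertical Reeb vector field. -/
theorem stmt_13 {E : Type*} [NormedAddCommGroup E] [InnerProductSpace ℝ E]
    [FiniteDimensional ℝ E]
    (c : ℝ) (r n : ℕ) (hr : 0 < r) (hn : 0 < n)
    (VS : Submodule ℝ E)
    (U : OrthonormalBasis (Fin r) ℝ ↥VS)
    (X : OrthonormalBasis (Fin n) ℝ ↥VSᗮ)
    (ξ : E) (hξV : ξ ∈ VS) (hξ : ‖ξ‖ = 1)
    (η : E → ℝ) (hη : ∀ Y, η Y = ⟪Y, ξ⟫)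
    (φ : E →ₗ[ℝ] E) (hφskew : ∀ Y Z, ⟪φ Y, Z⟫ = -⟪Y, φ Z⟫)
    (hφ2 : ∀ Y, φ (φ Y) = -Y + η Y • ξ)
    (hanti : ∀ v ∈ VS, φ v ∈ VSᗮ)
    (C : ↥VSᗮ → ↥VSᗮ)
    (hC : ∀ x : ↥VSᗮ, (C x : E) = Submodule.orthogonalProjectionOnto VSᗮ (φ (x : E)))
    (T : ↥VS →ₗ[ℝ] ↥VS →ₗ[ℝ] ↥VSᗮ) (hT : ∀ u v, T u v = T v u)
    (A : ↥VSᗮ →ₗ[ℝ] ↥VSᗮ →ₗ[ℝ] ↥VS) (hA : ∀ x y, A x y = -A y x)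
    (N : ↥VSᗮ) (hN : N = ∑ j, T (U j) (U j))
    (Rhat : ↥VS → ↥VS → ↥VS → ↥VS → ℝ)
    (hRhat : ∀ x y z w, Rhat x y z w =
      (c + 3) / 4 * (⟪y, z⟫ * ⟪x, w⟫ - ⟪x, z⟫ * ⟪y, w⟫)
        + (c - 1) / 4 * (η (x : E) * η (z : E) * ⟪y, w⟫
            - η (y : E) * η (z : E) * ⟪x, w⟫
            + η (y : E) * η (w : E) * ⟪x, z⟫
            - η (x : E) * η (w : E) * ⟪y, z⟫)
        - ⟪T x w, T y z⟫ + ⟪T y w, T x z⟫)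
    (Rstar : ↥VSᗮ → ↥VSᗮ → ↥VSᗮ → ↥VSᗮ → ℝ)
    (hRstar : ∀ x y z w, Rstar x y z w =
      (c + 3) / 4 * (⟪y, z⟫ * ⟪x, w⟫ - ⟪x, z⟫ * ⟪y, w⟫)
        + (c - 1) / 4 * (⟪C y, z⟫ * ⟪C x, w⟫ - ⟪C y, w⟫ * ⟪C x, z⟫
            - 2 * ⟪w, C z⟫ * ⟪C x, y⟫)
        + 2 * ⟪A x y, A z w⟫ - ⟪A y z, A x w⟫ + ⟪A x z, A y w⟫)
    (Rc : E → E → E → E → ℝ)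
    (hRc : ∀ x y z w, Rc x y z w =
      (c + 3) / 4 * (⟪y, z⟫ * ⟪x, w⟫ - ⟪x, z⟫ * ⟪y, w⟫)
        + (c - 1) / 4 * (η x * η z * ⟪y, w⟫ - η y * η z * ⟪x, w⟫
            + η y * η w * ⟪x, z⟫ - η x * η w * ⟪y, z⟫
            + ⟪φ y, z⟫ * ⟪φ x, w⟫ - ⟪φ x, z⟫ * ⟪φ y, w⟫
            - 2 * ⟪φ x, y⟫ * ⟪φ z, w⟫))
    (δ tV aH : ℝ)
    (hmix : -δ + tV - aH = ∑ i, ∑ k,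
      Rc (X i : E) (U k : E) (U k : E) (X i : E)) :
    ((c + 3) / 4 * ((n : ℝ) * (r : ℝ) + (n : ℝ) + (r : ℝ) - 2)
        + (c - 1) / 4 * (3 * (r : ℝ) - 4 - (n : ℝ)
            - ((r : ℝ) - 2) * (η (U ⟨0, hr⟩ : E)) ^ 2
            + 3 * ‖C (X ⟨0, hn⟩)‖ ^ 2) ≤
      (∑ k, Rhat (U k) (U ⟨0, hr⟩) (U ⟨0, hr⟩) (U k))
        + (∑ s, Rstar (X ⟨0, hn⟩) (X s) (X s) (X ⟨0, hn⟩))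
        + (1 / 4) * ‖N‖ ^ 2
        + 3 * ∑ s ∈ Finset.univ.filter (fun s => s ≠ ⟨0, hn⟩),
            ‖A (X ⟨0, hn⟩) (X s)‖ ^ 2
        - δ + tV - aH) ∧
    (((c + 3) / 4 * ((n : ℝ) * (r : ℝ) + (n : ℝ) + (r : ℝ) - 2)
        + (c - 1) / 4 * (3 * (r : ℝ) - 4 - (n : ℝ)
            - ((r : ℝ) - 2) * (η (U ⟨0, hr⟩ : E)) ^ 2
            + 3 * ‖C (X ⟨0, hn⟩)‖ ^ 2) =
      (∑ k, Rhat (U k) (U ⟨0, hr⟩) (U ⟨0, hr⟩) (U k))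
        + (∑ s, Rstar (X ⟨0, hn⟩) (X s) (X s) (X ⟨0, hn⟩))
        + (1 / 4) * ‖N‖ ^ 2
        + 3 * ∑ s ∈ Finset.univ.filter (fun s => s ≠ ⟨0, hn⟩),
            ‖A (X ⟨0, hn⟩) (X s)‖ ^ 2
        - δ + tV - aH) ↔
      (T (U ⟨0, hr⟩) (U ⟨0, hr⟩) =
          ∑ j ∈ Finset.univ.filter (fun j => j ≠ ⟨0, hr⟩), T (U j) (U j) ∧
        ∀ j : Fin r, j ≠ ⟨0, hr⟩ → T (U ⟨0, hr⟩) (U j) = 0)) := by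
  set i₀ : Fin r := ⟨0, hr⟩
  set j₀ : Fin n := ⟨0, hn⟩
  set e : VS := ⟨ξ, hξV⟩
  have hRhat' : Rhat = fiberCurvature c e T := by
    funext x y z w
    rw [hRhat]
    simp only [hη]
    rfl
  have hRstar' : Rstar = horizontalCurvature c C A := by
    funext x y z w
    exact hRstar x y z w
  have hRc' : Rc = sasakianCurvature c ξ φ := by
    funext x y z w
    rw [hRc]
    simp only [hη]
    rfl
  have hφ2' : ∀ y, φ (φ y) = -y + ⟪y, ξ⟫ • ξ := fun y => by rw [hφ2, hη]
  have hA₀ : ∑ s ∈ Finset.univ.filter (fun s => s ≠ j₀), ‖A (X j₀) (X s)‖ ^ 2 =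
      ∑ s, ‖A (X j₀) (X s)‖ ^ 2 :=
    sum_filter_of_ne fun s _ hs => by
      rintro rfl
      simp [apply_self_eq_zero_of_antisymm hA] at hs
  refine le_and_eq_iff_of_eq_add ?_ (chenDefect_nonneg (fun k l => T (U k) (U l)) i₀)
    (chenDefect_eq_zero_iff _ i₀)
  have hmix' : -δ + tV - aH = n * r * ((c + 3) / 4) + (c - 1) / 4 * (3 * r - n - 3) := by
    rw [hmix, hRc', sum_sum_sasakianCurvature U X hξV hξ hφskew hφ2' hanti c, Fintype.card_fin,
      Fintype.card_fin]
  have hηU : η (U i₀) = ⟪U i₀, e⟫ := hη _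
  rw [hRhat', sum_fiberCurvature hT c (e := e) hξ (U.orthonormal.1 i₀) U, hRstar',
    sum_horizontalCurvature (inner_orthogonalProjection_comp_skew hφskew hC) hA c
      (X.orthonormal.1 j₀) X, hA₀, hηU, ← quarter_norm_sq_sub_inner_add_sum_norm_sq, hN,
    Fintype.card_fin, Fintype.card_fin]
  linear_combination hmix'
end

section
/- Σ_{i=1}^n ‖C X_i‖² = n + tr(φ ∘ B), where φ ∘ B is regarded as a linear endomorphism of V⊥ (it maps V⊥ into V⊥ since B takes values in V and φ(V) ⊆ V⊥). Consequently Σ_{i,j=1}^n ⟨C X_i, X_j⟩² = n + tr(φ ∘ B). -/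
open scoped RealInnerProductSpace

/-!
For a unit vector `x ⊥ V` we have `⟪x, ξ⟫ = 0`, so the structure equations give `‖φ x‖ = 1`.
Splitting `φ x = B x + C x` orthogonally, `1 = ‖B x‖² + ‖C x‖²`, while skewness gives
`⟪φ (B x), x⟫ = -⟪B x, φ x⟫ = -‖B x‖²`. Hence `‖C x‖² = 1 + ⟪φ (B x), x⟫`, and summing over an
orthonormal basis of `Vᗮ` yields `n + tr (φ ∘ B)`. The double sum is the same quantity by
Parseval, since `C x ∈ Vᗮ`.
-/

section SkewMap

variable {E : Type*} [NormedAddCommGroup E] [InnerProductSpace ℝ E] {φ : E →ₗ[ℝ] E}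

theorem norm_sq_map_eq_of_inner_eq_zero {ξ : E} (hskew : ∀ X Y, ⟪φ X, Y⟫ = -⟪X, φ Y⟫)
    (hφ2 : ∀ X, φ (φ X) = -X + ⟪X, ξ⟫ • ξ) {x : E} (hx : ⟪x, ξ⟫ = 0) :
    ‖φ x‖ ^ 2 = ‖x‖ ^ 2 := by
  rw [← real_inner_self_eq_norm_sq, hskew, hφ2, hx, zero_smul, add_zero, inner_neg_right,
    neg_neg, real_inner_self_eq_norm_sq]

theorem inner_map_orthogonalProjectionOnto_map_self (hskew : ∀ X Y, ⟪φ X, Y⟫ = -⟪X, φ Y⟫)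
    (K : Submodule ℝ E) [K.HasOrthogonalProjection] (x : E) :
    ⟪φ (K.orthogonalProjectionOnto (φ x)), x⟫ = -‖K.orthogonalProjectionOnto (φ x)‖ ^ 2 := by
  rw [hskew, ← Submodule.inner_orthogonalProjectionOnto_eq_of_mem_left,
    real_inner_self_eq_norm_sq]

theorem norm_sq_orthogonalProjectionOnto_orthogonal_map {ξ : E}
    (hskew : ∀ X Y, ⟪φ X, Y⟫ = -⟪X, φ Y⟫) (hφ2 : ∀ X, φ (φ X) = -X + ⟪X, ξ⟫ • ξ)
    (K : Submodule ℝ E) [K.HasOrthogonalProjection] {x : E} (hx : ⟪x, ξ⟫ = 0) :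
    ‖Kᗮ.orthogonalProjectionOnto (φ x)‖ ^ 2
      = ‖x‖ ^ 2 + ⟪φ (K.orthogonalProjectionOnto (φ x)), x⟫ := by
  rw [inner_map_orthogonalProjectionOnto_map_self hskew,
    ← norm_sq_map_eq_of_inner_eq_zero hskew hφ2 hx,
    Submodule.norm_sq_eq_add_norm_sq_projection (φ x) K]
  ring

end SkewMap

theorem stmt_17_general {E : Type*} [NormedAddCommGroup E] [InnerProductSpace ℝ E]
    [FiniteDimensional ℝ E]
    (ξ : E) (η : E → ℝ) (hη : ∀ X, η X = ⟪X, ξ⟫)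
    (φ : E →ₗ[ℝ] E) (hskew : ∀ X Y, ⟪φ X, Y⟫ = -⟪X, φ Y⟫)
    (hφ2 : ∀ X, φ (φ X) = -X + η X • ξ)
    (V : Submodule ℝ E) (hξV : ξ ∈ V)
    (B C : E → E)
    (hB : ∀ x, B x = (V.orthogonalProjectionOnto (φ x) : E))
    (hC : ∀ x, C x = (Vᗮ.orthogonalProjectionOnto (φ x) : E))
    (n : ℕ) (X : OrthonormalBasis (Fin n) ℝ ↥Vᗮ)
    (F : ↥Vᗮ →ₗ[ℝ] ↥Vᗮ) (hF : ∀ x : ↥Vᗮ, (F x : E) = φ (B (x : E))) :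
    (∑ i, ‖C (X i : E)‖ ^ 2 = (n : ℝ) + LinearMap.trace ℝ ↥Vᗮ F) ∧
    (∑ i, ∑ j, ⟪C (X i : E), (X j : E)⟫ ^ 2 = (n : ℝ) + LinearMap.trace ℝ ↥Vᗮ F) := by
  obtain rfl : η = fun X => ⟪X, ξ⟫ := funext hη
  have hCX : ∀ i, ‖C (X i : E)‖ ^ 2 = 1 + ⟪X i, F (X i)⟫ := fun i => by
    rw [hC, Submodule.norm_coe, norm_sq_orthogonalProjectionOnto_orthogonal_map hskew hφ2 V
      (Submodule.inner_left_of_mem_orthogonal hξV (X i).2), Submodule.norm_coe, X.norm_eq_one,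
      one_pow, real_inner_comm, Submodule.coe_inner, hF, hB]
  have hsum : ∑ i, ‖C (X i : E)‖ ^ 2 = n + LinearMap.trace ℝ ↥Vᗮ F := by
    simp [hCX, Finset.sum_add_distrib, LinearMap.trace_eq_sum_inner F X]
  have hparseval : ∀ i, ∑ j, ⟪C (X i : E), (X j : E)⟫ ^ 2 = ‖C (X i : E)‖ ^ 2 := fun i => by
    simpa only [hC, Submodule.coe_inner, Submodule.norm_coe]
      using X.sum_sq_inner_left (Vᗮ.orthogonalProjectionOnto (φ (X i)))
  exact ⟨hsum, by simp only [hparseval, hsum]⟩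

/-- `Σ ‖C Xᵢ‖² = n + tr(φ ∘ B)` for an anti-invariant vertical distribution
containing the Reeb vector field. -/
theorem stmt_17 {E : Type*} [NormedAddCommGroup E] [InnerProductSpace ℝ E]
    [FiniteDimensional ℝ E]
    (ξ : E) (hξ : ‖ξ‖ = 1) (η : E → ℝ) (hη : ∀ X, η X = ⟪X, ξ⟫)
    (φ : E →ₗ[ℝ] E) (hskew : ∀ X Y, ⟪φ X, Y⟫ = -⟪X, φ Y⟫)
    (hφ2 : ∀ X, φ (φ X) = -X + η X • ξ)
    (V : Submodule ℝ E) (hξV : ξ ∈ V) (hanti : ∀ v ∈ V, φ v ∈ Vᗮ)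
    (B C : E → E)
    (hB : ∀ x, B x = (V.orthogonalProjectionOnto (φ x) : E))
    (hC : ∀ x, C x = (Vᗮ.orthogonalProjectionOnto (φ x) : E))
    (n : ℕ) (X : OrthonormalBasis (Fin n) ℝ ↥Vᗮ)
    (F : ↥Vᗮ →ₗ[ℝ] ↥Vᗮ) (hF : ∀ x : ↥Vᗮ, (F x : E) = φ (B (x : E))) :
    (∑ i, ‖C (X i : E)‖ ^ 2 = (n : ℝ) + LinearMap.trace ℝ ↥Vᗮ F) ∧
    (∑ i, ∑ j, ⟪C (X i : E), (X j : E)⟫ ^ 2 = (n : ℝ) + LinearMap.trace ℝ ↥Vᗮ F) :=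
  stmt_17_general ξ η hη φ hskew hφ2 V hξV B C hB hC n X F hF
end

section
/- Σ_{i=1}^n ‖C X_i‖² = n − 1 + tr(φ ∘ B), where φ ∘ B is regarded as a linear endomorphism of V⊥ (it maps V⊥ into V⊥ since B takes values in V and φ(V) ⊆ V⊥). Consequently Σ_{i,j=1}^n ⟨C X_i, X_j⟩² = n − 1 + tr(φ ∘ B). -/
/-!
Split `φ x = B x + C x` orthogonally. Then `‖C x‖² = ‖φ x‖² - ‖B x‖²`, where
`‖φ x‖² = ‖x‖² - ⟪x, ξ⟫²` and, by skew-symmetry, `‖B x‖² = ⟪B x, φ x⟫ = -⟪φ (B x), x⟫`.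
Summing over the basis, Parseval for `ξ ∈ Vᗮ` gives `∑ ⟪Xᵢ, ξ⟫² = 1` and the last terms add up
to `tr F`; Parseval for `C Xᵢ ∈ Vᗮ` gives the second identity.
-/

open scoped RealInnerProductSpace

section AlmostContactMetric

variable {E : Type*} [NormedAddCommGroup E] [InnerProductSpace ℝ E]

theorem Submodule.real_inner_starProjection_self (K : Submodule ℝ E) [K.HasOrthogonalProjection]
    (w : E) : ⟪K.starProjection w, w⟫ = ‖K.starProjection w‖ ^ 2 := by
  have h := K.starProjection_inner_eq_zero w _ (K.starProjection_apply_mem w)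
  rw [inner_sub_left] at h
  rw [real_inner_comm, ← real_inner_self_eq_norm_sq]
  linarith

variable {ξ : E} {φ : E →ₗ[ℝ] E}

theorem norm_sq_apply_of_skew_of_sq_eq (hskew : ∀ X Y, ⟪φ X, Y⟫ = -⟪X, φ Y⟫)
    (hφ2 : ∀ X, φ (φ X) = -X + ⟪X, ξ⟫ • ξ) (x : E) :
    ‖φ x‖ ^ 2 = ‖x‖ ^ 2 - ⟪x, ξ⟫ ^ 2 := by
  rw [← real_inner_self_eq_norm_sq, hskew, hφ2, inner_add_right, inner_neg_right,
    real_inner_smul_right, real_inner_self_eq_norm_sq]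
  ring

theorem norm_sq_starProjection_orthogonal_apply (K : Submodule ℝ E) [K.HasOrthogonalProjection]
    (hskew : ∀ X Y, ⟪φ X, Y⟫ = -⟪X, φ Y⟫) (hφ2 : ∀ X, φ (φ X) = -X + ⟪X, ξ⟫ • ξ) (x : E) :
    ‖Kᗮ.starProjection (φ x)‖ ^ 2 = ‖x‖ ^ 2 - ⟪x, ξ⟫ ^ 2 + ⟪φ (K.starProjection (φ x)), x⟫ := by
  have hpyth := K.norm_sq_eq_add_norm_sq_starProjection (φ x)
  have hφx := norm_sq_apply_of_skew_of_sq_eq hskew hφ2 x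
  have hK : ⟪φ (K.starProjection (φ x)), x⟫ = -‖K.starProjection (φ x)‖ ^ 2 := by
    rw [hskew, K.real_inner_starProjection_self]
  linarith

end AlmostContactMetric

theorem stmt_18_general {E : Type*} [NormedAddCommGroup E] [InnerProductSpace ℝ E]
    [FiniteDimensional ℝ E]
    (ξ : E) (hξ : ‖ξ‖ = 1) (η : E → ℝ) (hη : ∀ X, η X = ⟪X, ξ⟫)
    (φ : E →ₗ[ℝ] E) (hskew : ∀ X Y, ⟪φ X, Y⟫ = -⟪X, φ Y⟫)
    (hφ2 : ∀ X, φ (φ X) = -X + η X • ξ)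
    (V : Submodule ℝ E) (hξV : ξ ∈ Vᗮ)
    (B C : E → E)
    (hB : ∀ x, B x = (V.orthogonalProjectionOnto (φ x) : E))
    (hC : ∀ x, C x = (Vᗮ.orthogonalProjectionOnto (φ x) : E))
    (n : ℕ) (X : OrthonormalBasis (Fin n) ℝ ↥Vᗮ)
    (F : ↥Vᗮ →ₗ[ℝ] ↥Vᗮ) (hF : ∀ x : ↥Vᗮ, (F x : E) = φ (B (x : E))) :
    (∑ i, ‖C (X i : E)‖ ^ 2 = (n : ℝ) - 1 + LinearMap.trace ℝ ↥Vᗮ F) ∧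
    (∑ i, ∑ j, ⟪C (X i : E), (X j : E)⟫ ^ 2 = (n : ℝ) - 1 + LinearMap.trace ℝ ↥Vᗮ F) := by
  have hφ2' : ∀ x, φ (φ x) = -x + ⟪x, ξ⟫ • ξ := fun x => by rw [hφ2, hη]
  have hCmem : ∀ x, C x ∈ Vᗮ := fun x => by simp [hC]
  have hCX : ∀ x : ↥Vᗮ, ‖C x‖ ^ 2 = ‖(x : E)‖ ^ 2 - ⟪(x : E), ξ⟫ ^ 2 + ⟪(F x : E), x⟫ := by
    intro x
    rw [hF, hC, hB]
    exact norm_sq_starProjection_orthogonal_apply V hskew hφ2' x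
  have hξsum : ∑ i, ⟪(X i : E), ξ⟫ ^ 2 = 1 := by
    simpa [hξ] using X.sum_sq_inner_right ⟨ξ, hξV⟩
  have htrace : LinearMap.trace ℝ ↥Vᗮ F = ∑ i, ⟪(F (X i) : E), X i⟫ := by
    simp [LinearMap.trace_eq_sum_inner F X, real_inner_comm]
  have hsum : ∑ i, ‖C (X i : E)‖ ^ 2 = (n : ℝ) - 1 + LinearMap.trace ℝ ↥Vᗮ F := by
    have hnorm : ∀ i, ‖(X i : E)‖ = 1 := X.orthonormal.1
    simp [hCX, Finset.sum_add_distrib, Finset.sum_sub_distrib, hnorm, hξsum, htrace]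
  refine ⟨hsum, hsum ▸ Finset.sum_congr rfl fun i _ => ?_⟩
  simpa using X.sum_sq_inner_left ⟨C (X i), hCmem _⟩

/-- `Σ ‖C Xᵢ‖² = n - 1 + tr(φ ∘ B)` for an anti-invariant vertical distribution
with horizontal Reeb vector field. -/
theorem stmt_18 {E : Type*} [NormedAddCommGroup E] [InnerProductSpace ℝ E]
    [FiniteDimensional ℝ E]
    (ξ : E) (hξ : ‖ξ‖ = 1) (η : E → ℝ) (hη : ∀ X, η X = ⟪X, ξ⟫)
    (φ : E →ₗ[ℝ] E) (hskew : ∀ X Y, ⟪φ X, Y⟫ = -⟪X, φ Y⟫)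
    (hφ2 : ∀ X, φ (φ X) = -X + η X • ξ)
    (V : Submodule ℝ E) (hξV : ξ ∈ Vᗮ) (hanti : ∀ v ∈ V, φ v ∈ Vᗮ)
    (B C : E → E)
    (hB : ∀ x, B x = (V.orthogonalProjectionOnto (φ x) : E))
    (hC : ∀ x, C x = (Vᗮ.orthogonalProjectionOnto (φ x) : E))
    (n : ℕ) (X : OrthonormalBasis (Fin n) ℝ ↥Vᗮ)
    (F : ↥Vᗮ →ₗ[ℝ] ↥Vᗮ) (hF : ∀ x : ↥Vᗮ, (F x : E) = φ (B (x : E))) :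
    (∑ i, ‖C (X i : E)‖ ^ 2 = (n : ℝ) - 1 + LinearMap.trace ℝ ↥Vᗮ F) ∧
    (∑ i, ∑ j, ⟪C (X i : E), (X j : E)⟫ ^ 2 = (n : ℝ) - 1 + LinearMap.trace ℝ ↥Vᗮ F) :=
  stmt_18_general ξ hξ η hη φ hskew hφ2 V hξV B C hB hC n X F hF
end
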